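/- arXiv:1512.09123 — 13 statements merged into one kernel-verified Lean document; each statement's English description precedes it below -/
import Mathlib

section
/- Let v : ℤ → ℝ → ℂ be such that for every n ∈ ℤ and t ∈ ℝ the derivative ∂_t v(n,t) exists and equals v(n,t)^2·(v(n+1,t) − v(n−1,t)) (the modified Volterra equation). Define u(n,t) := v(n,t)·v(n+1,t). Then for every n and t, ∂_t u(n,t) = u(n,t)·(u(n+1,t) − u(n−1,t)), i.e. u satisfies the Volterra equation. Thus u = v·v₁ is a Miura-type transformation from the modified Volterra equation to the Volterra equation. -/
/-! The time derivative of `u = v v₁` is `v_t v₁ + v (v₁)_t`; substituting the modified Volterra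
equation for `v` and `v₁` gives `v²v₁(v₁ − v₋₁) + v v₁²(v₂ − v) = v v₁ (v₁v₂ − v₋₁v)`,
which is `u (u₁ − u₋₁)`. -/

section

variable {𝕜 𝔸 : Type*} [NontriviallyNormedField 𝕜] [NormedCommRing 𝔸] [NormedAlgebra 𝕜 𝔸]

def IsModifiedVolterraSolution (v : ℤ → 𝕜 → 𝔸) : Prop :=
  ∀ n t, HasDerivAt (v n) (v n t ^ 2 * (v (n + 1) t - v (n - 1) t)) t

def IsVolterraSolution (u : ℤ → 𝕜 → 𝔸) : Prop :=
  ∀ n t, HasDerivAt (u n) (u n t * (u (n + 1) t - u (n - 1) t)) t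

theorem miura_identity {R : Type*} [CommRing R] (a b c d : R) :
    b ^ 2 * (c - a) * c + b * (c ^ 2 * (d - b)) = b * c * (c * d - a * b) := by
  ring

theorem IsModifiedVolterraSolution.isVolterraSolution_mul_shift {v : ℤ → 𝕜 → 𝔸}
    (hv : IsModifiedVolterraSolution v) :
    IsVolterraSolution fun n t ↦ v n t * v (n + 1) t := by
  intro n t
  have hprod := (hv n t).mul (hv (n + 1) t)
  rw [add_sub_cancel_right, miura_identity] at hprod
  beta_reduce
  rwa [sub_add_cancel]

end

/-- The formula `u = v·v₁` is a Miura-type transformation from the modified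
Volterra equation `v_t = v²(v₁ − v₋₁)` to the Volterra equation
`u_t = u(u₁ − u₋₁)`. -/
theorem miura_modified_volterra_to_volterra
    (v : ℤ → ℝ → ℂ)
    (hv : ∀ (n : ℤ) (t : ℝ),
      HasDerivAt (v n) ((v n t) ^ 2 * (v (n + 1) t - v (n - 1) t)) t)
    (u : ℤ → ℝ → ℂ)
    (hu : ∀ (n : ℤ) (t : ℝ), u n t = v n t * v (n + 1) t) :
    ∀ (n : ℤ) (t : ℝ),
      HasDerivAt (u n) (u n t * (u (n + 1) t - u (n - 1) t)) t := by
  obtain rfl : u = fun n t ↦ v n t * v (n + 1) t := funext₂ hu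
  exact IsModifiedVolterraSolution.isVolterraSolution_mul_shift hv
end

section
/- Fix λ ∈ ℂ. Let u : ℤ → ℝ → ℂ be nowhere zero and t-differentiable, and define 2×2 matrices M(n,t) := [[0, u(n,t)], [−1, λ]] and 𝒰(n,t) := [[u(n,t), λ·u(n−1,t)], [−λ, λ² + u(n−1,t)]]. Then the Darboux–Lax equation ∂_t M(n,t) = 𝒰(n+1,t)·M(n,t) − M(n,t)·𝒰(n,t) holds for all n ∈ ℤ and t ∈ ℝ if and only if u satisfies the Volterra equation ∂_t u(n,t) = u(n,t)·(u(n+1,t) − u(n−1,t)) for all n and t. -/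
/-!
The commutator `S(𝒰)·M − M·𝒰` vanishes identically except for its `(0, 1)` entry,
which is `u(u₁ − u₋₁)`, and `M` is constant except for its `(0, 1)` entry `u`.
So the Darboux–Lax equation is, entry by entry, either `0 = 0` or the Volterra equation.
-/

namespace Volterra

variable {R : Type*} [CommRing R]

-- `x` stands for `u n`, `y` for `u (n - 1)`.
abbrev darbouxMatrix (lam x : R) : Matrix (Fin 2) (Fin 2) R := !![0, x; -1, lam]

abbrev laxMatrix (lam x y : R) : Matrix (Fin 2) (Fin 2) R := !![x, lam * y; -lam, lam ^ 2 + y]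

theorem laxMatrix_mul_sub_mul_laxMatrix (lam up u um : R) :
    laxMatrix lam up u * darbouxMatrix lam u - darbouxMatrix lam u * laxMatrix lam u um
      = !![0, u * (up - um); 0, 0] := by
  ext i j
  fin_cases i <;> fin_cases j <;> simp <;> ring

theorem hasDerivAt_darbouxMatrix_entries_iff (lam d : ℂ) (f : ℝ → ℂ) (t : ℝ) :
    (∀ i j : Fin 2, HasDerivAt (fun s => darbouxMatrix lam (f s) i j) (!![0, d; 0, 0] i j) t)
      ↔ HasDerivAt f d t := by
  constructor
  · intro h
    simpa using h 0 1
  · intro h i j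
    fin_cases i <;> fin_cases j
    · exact hasDerivAt_const _ _
    · simpa using h
    · exact hasDerivAt_const _ _
    · exact hasDerivAt_const _ _

end Volterra

open Volterra

theorem DLR_volterra_iff_general
    (lam : ℂ) (u : ℤ → ℝ → ℂ)
    (M 𝒰 : ℤ → ℝ → Matrix (Fin 2) (Fin 2) ℂ)
    (hM : ∀ (n : ℤ) (t : ℝ), M n t = !![0, u n t; -1, lam])
    (hU : ∀ (n : ℤ) (t : ℝ),
      𝒰 n t = !![u n t, lam * u (n - 1) t; -lam, lam ^ 2 + u (n - 1) t]) :
    (∀ (n : ℤ) (t : ℝ) (i j : Fin 2),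
        HasDerivAt (fun s => M n s i j)
          ((𝒰 (n + 1) t * M n t - M n t * 𝒰 n t) i j) t)
    ↔ (∀ (n : ℤ) (t : ℝ),
        HasDerivAt (u n) (u n t * (u (n + 1) t - u (n - 1) t)) t) := by
  have hMfun : ∀ n, M n = fun s => darbouxMatrix lam (u n s) := fun n => funext (hM n)
  have hcomm : ∀ n t, 𝒰 (n + 1) t * M n t - M n t * 𝒰 n t
      = !![0, u n t * (u (n + 1) t - u (n - 1) t); 0, 0] := by
    intro n t
    rw [hU, hU, hM, add_sub_cancel_right]
    exact laxMatrix_mul_sub_mul_laxMatrix lam _ _ _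
  simp_rw [hcomm, hMfun]
  exact forall₂_congr fun n t => hasDerivAt_darbouxMatrix_entries_iff lam _ (u n) t

/-- For a nowhere-zero, t-differentiable `u : ℤ → ℝ → ℂ` and fixed `λ ∈ ℂ`, the
Darboux–Lax equation `∂ₜ M = S(𝒰)·M − M·𝒰` for
`M = [[0, u],[−1, λ]]`, `𝒰 = [[u, λu₋₁],[−λ, λ² + u₋₁]]`
holds (for all n, t) if and only if `u` satisfies the Volterra equation
`uₜ = u(u₁ − u₋₁)`. -/
theorem DLR_volterra_iff
    (lam : ℂ) (u : ℤ → ℝ → ℂ)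
    (hne : ∀ (n : ℤ) (t : ℝ), u n t ≠ 0)
    (hdiff : ∀ (n : ℤ) (t : ℝ), DifferentiableAt ℝ (u n) t)
    (M 𝒰 : ℤ → ℝ → Matrix (Fin 2) (Fin 2) ℂ)
    (hM : ∀ (n : ℤ) (t : ℝ), M n t = !![0, u n t; -1, lam])
    (hU : ∀ (n : ℤ) (t : ℝ),
      𝒰 n t = !![u n t, lam * u (n - 1) t; -lam, lam ^ 2 + u (n - 1) t]) :
    (∀ (n : ℤ) (t : ℝ) (i j : Fin 2),
        HasDerivAt (fun s => M n s i j)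
          ((𝒰 (n + 1) t * M n t - M n t * 𝒰 n t) i j) t)
    ↔ (∀ (n : ℤ) (t : ℝ),
        HasDerivAt (u n) (u n t * (u (n + 1) t - u (n - 1) t)) t) :=
  DLR_volterra_iff_general lam u M 𝒰 hM hU
end

section
/- Work in GL₂ over the field F = ℂ(λ) of rational functions in one variable λ. For each u ∈ ℂ with u ≠ 0 let M(u) ∈ GL₂(F) be the matrix [[0, u], [−1, λ]] (its determinant is u ≠ 0). Then the subgroup of GL₂(F) generated by the set { M(ũ)·M(u)⁻¹ : u, ũ ∈ ℂ, u ≠ 0, ũ ≠ 0 } is exactly the set of constant diagonal matrices { [[a, 0], [0, 1]] : a ∈ ℂ, a ≠ 0 }. (This is the group ℋ₁ associated with the Darboux–Lax representation of the Volterra equation.) -/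
open Matrix

/-!
Each generator `M(ũ) M(u)⁻¹` equals `diag(ũ / u, 1)`, and every `diag(a, 1)` with `a ≠ 0`
arises (take `u = 1`). So the generating set is already the image of the homomorphism
`ℂˣ → GL₂(ℂ(λ))`, `a ↦ diag(a, 1)`, hence a subgroup, and equals its own closure.
-/

/-- The Darboux matrix `M(u) = [[0, u],[−1, λ]]` of the Volterra equation,
as a matrix over the field `ℂ(λ)` of rational functions. -/
noncomputable def volterraDarbouxMatrix (u : ℂ) :
    Matrix (Fin 2) (Fin 2) (RatFunc ℂ) :=
  !![0, algebraMap ℂ (RatFunc ℂ) u; -1, RatFunc.X]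

namespace Matrix

variable {K : Type*}

lemma inv_of_zero_neg_one [Field K] {a : K} (ha : a ≠ 0) (x : K) :
    !![0, a; -1, x]⁻¹ = !![x / a, -1; 1 / a, 0] := by
  apply inv_eq_right_inv
  ext i j
  fin_cases i <;> fin_cases j <;> simp [ha, div_eq_mul_inv]

lemma mul_inv_of_zero_neg_one [Field K] (b : K) {a : K} (ha : a ≠ 0) (x : K) :
    !![0, b; -1, x] * !![0, a; -1, x]⁻¹ = !![b / a, 0; 0, 1] := by
  rw [inv_of_zero_neg_one ha, mul_fin_two]
  ext i j
  fin_cases i <;> fin_cases j <;> simp [div_eq_mul_inv]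

def diagFirstHom [CommRing K] : Kˣ →* GL (Fin 2) K where
  toFun a :=
    ⟨!![(a : K), 0; 0, 1], !![((a⁻¹ : Kˣ) : K), 0; 0, 1],
      by simp [one_fin_two], by simp [one_fin_two]⟩
  map_one' := by ext i j; fin_cases i <;> fin_cases j <;> rfl
  map_mul' a b := by ext i j; simp

end Matrix

lemma volterraDarbouxMatrix_mul_inv (utilde : ℂ) {u : ℂ} (hu : u ≠ 0) :
    volterraDarbouxMatrix utilde * (volterraDarbouxMatrix u)⁻¹ =
      !![algebraMap ℂ (RatFunc ℂ) (utilde / u), 0; 0, 1] := by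
  rw [volterraDarbouxMatrix, volterraDarbouxMatrix,
    mul_inv_of_zero_neg_one _ ((map_ne_zero _).mpr hu), map_div₀]

noncomputable def constDiagHom : ℂˣ →* GL (Fin 2) (RatFunc ℂ) :=
  diagFirstHom.comp (Units.map (algebraMap ℂ (RatFunc ℂ)))

lemma coe_range_constDiagHom :
    (constDiagHom.range : Set (GL (Fin 2) (RatFunc ℂ))) =
      { g : GL (Fin 2) (RatFunc ℂ) |
        ∃ a : ℂ, a ≠ 0 ∧ (g : Matrix (Fin 2) (Fin 2) (RatFunc ℂ)) =
          !![algebraMap ℂ (RatFunc ℂ) a, 0; 0, 1] } := by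
  ext g
  constructor
  · rintro ⟨a, rfl⟩
    exact ⟨a, a.ne_zero, rfl⟩
  · rintro ⟨a, ha, hg⟩
    exact ⟨Units.mk0 a ha, Units.ext hg.symm⟩

lemma volterra_generators_eq :
    { g : GL (Fin 2) (RatFunc ℂ) |
        ∃ u utilde : ℂ, u ≠ 0 ∧ utilde ≠ 0 ∧
          (g : Matrix (Fin 2) (Fin 2) (RatFunc ℂ)) =
            volterraDarbouxMatrix utilde * (volterraDarbouxMatrix u)⁻¹ } =
      { g : GL (Fin 2) (RatFunc ℂ) |
        ∃ a : ℂ, a ≠ 0 ∧ (g : Matrix (Fin 2) (Fin 2) (RatFunc ℂ)) =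
          !![algebraMap ℂ (RatFunc ℂ) a, 0; 0, 1] } := by
  ext g
  constructor
  · rintro ⟨u, utilde, hu, hutilde, hg⟩
    exact ⟨utilde / u, div_ne_zero hutilde hu, by rw [hg, volterraDarbouxMatrix_mul_inv _ hu]⟩
  · rintro ⟨a, ha, hg⟩
    refine ⟨1, a, one_ne_zero, ha, ?_⟩
    rw [hg, volterraDarbouxMatrix_mul_inv _ one_ne_zero, div_one]

/-- The group `ℋ₁` for the Darboux–Lax representation of the Volterra equation:
the subgroup of `GL₂(ℂ(λ))` generated by the products `M(ũ)·M(u)⁻¹`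
(for nonzero `u, ũ ∈ ℂ`) is exactly the set of constant diagonal matrices
`[[a, 0],[0, 1]]` with `a ∈ ℂ`, `a ≠ 0`. -/
theorem volterra_H1_group :
    (Subgroup.closure
      { g : GL (Fin 2) (RatFunc ℂ) |
        ∃ u utilde : ℂ, u ≠ 0 ∧ utilde ≠ 0 ∧
          (g : Matrix (Fin 2) (Fin 2) (RatFunc ℂ)) =
            volterraDarbouxMatrix utilde * (volterraDarbouxMatrix u)⁻¹ } :
      Set (GL (Fin 2) (RatFunc ℂ)))
    = { g : GL (Fin 2) (RatFunc ℂ) |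
        ∃ a : ℂ, a ≠ 0 ∧
          (g : Matrix (Fin 2) (Fin 2) (RatFunc ℂ)) =
            !![algebraMap ℂ (RatFunc ℂ) a, 0; 0, 1] } := by
  rw [volterra_generators_eq, ← coe_range_constDiagHom, Subgroup.closure_eq]
end

section
/- Fix c₁ ∈ ℂ. Let v : ℤ → ℝ → ℂ be nowhere zero and t-differentiable, satisfying for all n, t: ∂_t v(n,t) = (c₁·v(n,t)² + c₁·v(n−1,t)·v(n+1,t) − v(n+1,t)·v(n,t)) / v(n−1,t). Define u(n,t) := (c₁·v(n+1,t) − v(n+2,t)) / v(n,t). Then u satisfies the Volterra equation ∂_t u(n,t) = u(n,t)·(u(n+1,t) − u(n−1,t)) for all n and t. Thus u = (c₁v₁ − v₂)/v is a Miura-type transformation of order 2 to the Volterra equation. -/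
/-!
Differentiating `u = (c₁v₁ − v₂)/v` by the quotient rule and substituting the equation for `v`
at the sites `n`, `n + 1`, `n + 2` expresses `uₜ` as a rational function of `v₋₁, …, v₃`; so does
`u(u₁ − u₋₁)`, and the two rational functions coincide.
-/

section

variable {K : Type*} [Field K]

def miuraMap (c v v₁ v₂ : K) : K := (c * v₁ - v₂) / v

def modifiedVolterraRHS (c vm v vp : K) : K := (c * v ^ 2 + c * vm * vp - vp * v) / vm

theorem miuraMap_quotient_rule_eq_volterra (c x₀ x₁ x₂ x₃ x₄ : K) (h₀ : x₀ ≠ 0) (h₁ : x₁ ≠ 0)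
    (h₂ : x₂ ≠ 0) :
    ((c * modifiedVolterraRHS c x₁ x₂ x₃ - modifiedVolterraRHS c x₂ x₃ x₄) * x₁
        - (c * x₂ - x₃) * modifiedVolterraRHS c x₀ x₁ x₂) / x₁ ^ 2
      = miuraMap c x₁ x₂ x₃ * (miuraMap c x₂ x₃ x₄ - miuraMap c x₀ x₁ x₂) := by
  unfold modifiedVolterraRHS miuraMap
  field_simp
  ring

end

theorem HasDerivAt.miuraMap {𝕜 𝕜' : Type*} [NontriviallyNormedField 𝕜]
    [NontriviallyNormedField 𝕜'] [NormedAlgebra 𝕜 𝕜'] {c : 𝕜'} {f g h : 𝕜 → 𝕜'} {f' g' h' : 𝕜'}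
    {x : 𝕜} (hf : HasDerivAt f f' x) (hg : HasDerivAt g g' x) (hh : HasDerivAt h h' x)
    (hx : f x ≠ 0) :
    HasDerivAt (fun s => miuraMap c (f s) (g s) (h s))
      (((c * g' - h') * f x - (c * g x - h x) * f') / f x ^ 2) x :=
  ((hg.const_mul c).sub hh).fun_div hf hx

/-- The formula `u = (c₁v₁ − v₂)/v` is a Miura-type transformation (of order 2)
from the modified equation `vₜ = (c₁v² + c₁v₋₁v₁ − v₁v)/v₋₁` to the Volterra
equation `uₜ = u(u₁ − u₋₁)`. -/
theorem miura_order2_to_volterra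
    (c₁ : ℂ) (v : ℤ → ℝ → ℂ)
    (hne : ∀ (n : ℤ) (t : ℝ), v n t ≠ 0)
    (hv : ∀ (n : ℤ) (t : ℝ),
      HasDerivAt (v n)
        ((c₁ * (v n t) ^ 2 + c₁ * v (n - 1) t * v (n + 1) t
            - v (n + 1) t * v n t) / v (n - 1) t) t)
    (u : ℤ → ℝ → ℂ)
    (hu : ∀ (n : ℤ) (t : ℝ),
      u n t = (c₁ * v (n + 1) t - v (n + 2) t) / v n t) :
    ∀ (n : ℤ) (t : ℝ),
      HasDerivAt (u n) (u n t * (u (n + 1) t - u (n - 1) t)) t := by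
  intro n t
  have hv' (m : ℤ) :
      HasDerivAt (v m) (modifiedVolterraRHS c₁ (v (m - 1) t) (v m t) (v (m + 1) t)) t :=
    hv m t
  have hv₁ := hv' (n + 1)
  have hv₂ := hv' (n + 2)
  rw [add_sub_cancel_right, show n + 1 + 1 = n + 2 by ring] at hv₁
  rw [show n + 2 - 1 = n + 1 by ring, show n + 2 + 1 = n + 3 by ring] at hv₂
  rw [funext (hu n), hu (n + 1), hu (n - 1), show n + 1 + 1 = n + 2 by ring,
    show n + 1 + 2 = n + 3 by ring, sub_add_cancel, show n - 1 + 2 = n + 1 by ring]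
  exact ((hv' n).miuraMap hv₁ hv₂ (hne n t)).congr_deriv
    (miuraMap_quotient_rule_eq_volterra _ _ _ _ _ _ (hne (n - 1) t) (hne n t) (hne (n + 1) t))
end

section
/- Fix c₁ ∈ ℂ. Let v : ℤ → ℝ → ℂ be t-differentiable with v(n,t) + v(n−1,t) ≠ 0 and v(n,t) + v(n+1,t) ≠ 0 for all n, t, satisfying for all n, t: ∂_t v(n,t) = v(n,t)²·(v(n−1,t) − v(n+1,t))·(v(n,t) − c₁)·(v(n,t) + c₁) / ((v(n,t)+v(n−1,t))·(v(n,t)+v(n+1,t))). Define u(n,t) := v(n+1,t)²·(c₁ − v(n,t))·(c₁ + v(n+2,t)) / ((v(n,t)+v(n+1,t))·(v(n+1,t)+v(n+2,t))). Then u satisfies the Volterra equation ∂_t u(n,t) = u(n,t)·(u(n+1,t) − u(n−1,t)) for all n and t. -/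
/-!
By the chain rule, `∂ₜ u(n)` is a linear combination of `∂ₜ v(n)`, `∂ₜ v(n+1)`, `∂ₜ v(n+2)` whose
coefficients are the partial derivatives of the Miura map. Substituting the modified equation
for these three derivatives leaves a rational expression in `v(n-1), …, v(n+3)`, and the theorem
reduces to a rational identity, checked by clearing the denominators `v(k) + v(k+1)`.
-/

noncomputable section

namespace MiuraV2

/- `modVolterra c v₋₁ v v₁` is the right-hand side of the modified equation at a site and
`miura c v v₁ v₂` the value of `u` there. -/
def modVolterra (c x y z : ℂ) : ℂ :=
  y ^ 2 * (x - z) * (y - c) * (y + c) / ((y + x) * (y + z))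

def miura (c x y z : ℂ) : ℂ :=
  y ^ 2 * (c - x) * (c + z) / ((x + y) * (y + z))

def miuraDeriv (c x y z x' y' z' : ℂ) : ℂ :=
  -(y ^ 2 * (c + y) * (c + z)) / ((x + y) ^ 2 * (y + z)) * x'
    + y * (x * y + y * z + 2 * x * z) * (c - x) * (c + z) / ((x + y) ^ 2 * (y + z) ^ 2) * y'
    + y ^ 2 * (c - x) * (y - c) / ((x + y) * (y + z) ^ 2) * z'

theorem hasDerivAt_miura {f g h : ℝ → ℂ} {f' g' h' : ℂ} {t : ℝ} (c : ℂ)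
    (hf : HasDerivAt f f' t) (hg : HasDerivAt g g' t) (hh : HasDerivAt h h' t)
    (hfg : f t + g t ≠ 0) (hgh : g t + h t ≠ 0) :
    HasDerivAt (fun s => miura c (f s) (g s) (h s))
      (miuraDeriv c (f t) (g t) (h t) f' g' h') t := by
  have hnum := ((hg.fun_pow 2).fun_mul (hf.const_sub c)).fun_mul (hh.const_add c)
  have hden := (hf.fun_add hg).fun_mul (hg.fun_add hh)
  refine (hnum.fun_div hden (mul_ne_zero hfg hgh)).congr_deriv ?_
  simp only [miuraDeriv]
  field_simp
  ring

theorem miuraDeriv_modVolterra (c w₀ w₁ w₂ w₃ w₄ : ℂ)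
    (h₀₁ : w₀ + w₁ ≠ 0) (h₁₂ : w₁ + w₂ ≠ 0) (h₂₃ : w₂ + w₃ ≠ 0) (h₃₄ : w₃ + w₄ ≠ 0) :
    miuraDeriv c w₁ w₂ w₃ (modVolterra c w₀ w₁ w₂) (modVolterra c w₁ w₂ w₃)
        (modVolterra c w₂ w₃ w₄)
      = miura c w₁ w₂ w₃ * (miura c w₂ w₃ w₄ - miura c w₀ w₁ w₂) := by
  have h₁₀ : w₁ + w₀ ≠ 0 := by rwa [add_comm]
  have h₂₁ : w₂ + w₁ ≠ 0 := by rwa [add_comm]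
  have h₃₂ : w₃ + w₂ ≠ 0 := by rwa [add_comm]
  simp only [miuraDeriv, modVolterra, miura]
  field_simp
  ring

end MiuraV2

end

theorem miura_V2_to_volterra_general
    (c₁ : ℂ) (v : ℤ → ℝ → ℂ)
    (hne₂ : ∀ (n : ℤ) (t : ℝ), v n t + v (n + 1) t ≠ 0)
    (hv : ∀ (n : ℤ) (t : ℝ),
      HasDerivAt (v n)
        ((v n t) ^ 2 * (v (n - 1) t - v (n + 1) t)
            * (v n t - c₁) * (v n t + c₁)
          / ((v n t + v (n - 1) t) * (v n t + v (n + 1) t))) t)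
    (u : ℤ → ℝ → ℂ)
    (hu : ∀ (n : ℤ) (t : ℝ),
      u n t = (v (n + 1) t) ^ 2 * (c₁ - v n t) * (c₁ + v (n + 2) t)
        / ((v n t + v (n + 1) t) * (v (n + 1) t + v (n + 2) t))) :
    ∀ (n : ℤ) (t : ℝ),
      HasDerivAt (u n) (u n t * (u (n + 1) t - u (n - 1) t)) t := by
  intro n t
  have hv' (l m r : ℤ) (hl : l + 1 = m) (hr : m + 1 = r) :
      HasDerivAt (v m) (MiuraV2.modVolterra c₁ (v l t) (v m t) (v r t)) t := by
    subst hr; obtain rfl : l = m - 1 := by omega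
    exact hv m t
  have hne (l r : ℤ) (hr : l + 1 = r) : v l t + v r t ≠ 0 := hr ▸ hne₂ l t
  have hu' (l m r : ℤ) (hm : l + 1 = m) (hr : l + 2 = r) :
      u l = fun s => MiuraV2.miura c₁ (v l s) (v m s) (v r s) := by
    subst hm hr; exact funext (hu l)
  have hderiv := MiuraV2.hasDerivAt_miura c₁ (hv' (n - 1) n (n + 1) (by ring) rfl)
    (hv' n (n + 1) (n + 2) rfl (by ring)) (hv' (n + 1) (n + 2) (n + 3) (by ring) (by ring))
    (hne n (n + 1) rfl) (hne (n + 1) (n + 2) (by ring))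
  rw [MiuraV2.miuraDeriv_modVolterra c₁ _ _ _ _ _ (hne (n - 1) n (by ring)) (hne n (n + 1) rfl)
    (hne (n + 1) (n + 2) (by ring)) (hne (n + 2) (n + 3) (by ring))] at hderiv
  rwa [hu' n (n + 1) (n + 2) rfl rfl, hu' (n + 1) (n + 2) (n + 3) (by ring) (by ring),
    hu' (n - 1) n (n + 1) (by ring) (by ring)]

/-- The formula `u = v₁²(c₁ − v)(c₁ + v₂)/((v + v₁)(v₁ + v₂))` is a Miura-type
transformation from the modified equation
`vₜ = v²(v₋₁ − v₁)(v − c₁)(v + c₁)/((v + v₋₁)(v + v₁))`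
to the Volterra equation `uₜ = u(u₁ − u₋₁)`. -/
theorem miura_V2_to_volterra
    (c₁ : ℂ) (v : ℤ → ℝ → ℂ)
    (hne₁ : ∀ (n : ℤ) (t : ℝ), v n t + v (n - 1) t ≠ 0)
    (hne₂ : ∀ (n : ℤ) (t : ℝ), v n t + v (n + 1) t ≠ 0)
    (hv : ∀ (n : ℤ) (t : ℝ),
      HasDerivAt (v n)
        ((v n t) ^ 2 * (v (n - 1) t - v (n + 1) t)
            * (v n t - c₁) * (v n t + c₁)
          / ((v n t + v (n - 1) t) * (v n t + v (n + 1) t))) t)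
    (u : ℤ → ℝ → ℂ)
    (hu : ∀ (n : ℤ) (t : ℝ),
      u n t = (v (n + 1) t) ^ 2 * (c₁ - v n t) * (c₁ + v (n + 2) t)
        / ((v n t + v (n + 1) t) * (v (n + 1) t + v (n + 2) t))) :
    ∀ (n : ℤ) (t : ℝ),
      HasDerivAt (u n) (u n t * (u (n + 1) t - u (n - 1) t)) t :=
  miura_V2_to_volterra_general c₁ v hne₂ hv u hu
end

section
/- Fix λ ∈ ℂ. Let u : ℤ → ℝ → ℂ be nowhere zero and t-differentiable. Define 3×3 matrices M(n,t) := [[0,1,0],[0,0,1],[−u(n,t),0,λ]] and 𝒰(n,t) := [[u(n−2,t)+u(n−1,t), 0, λ],[−λ·u(n,t), u(n−1,t)+u(n,t), λ²],[−λ²·u(n,t), −λ·u(n+1,t), λ³+u(n+1,t)+u(n,t)]]. Then the Darboux–Lax equation ∂_t M(n,t) = 𝒰(n+1,t)·M(n,t) − M(n,t)·𝒰(n,t) holds for all n and t, and for all λ ∈ ℂ, if and only if u satisfies the Narita–Itoh–Bogoyavlensky lattice with p = 2: ∂_t u(n,t) = u(n,t)·(u(n+2,t)+u(n+1,t)−u(n−1,t)−u(n−2,t))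 for all n and t. -/
/-! The commutator `S(𝒰)·M − M·𝒰` vanishes for every `λ` except in entry `(3,1)`, where it
equals `−u(u₂ + u₁ − u₋₁ − u₋₂)`. Since the only `t`-dependent entry of `M` is `−u` at `(3,1)`,
the Darboux–Lax equation is exactly the lattice equation. -/

-- `a, b, c, d, e` stand for `u₋₂, u₋₁, u, u₁, u₂`.
theorem bogoyavlensky_p2_laxCommutator (lam a b c d e : ℂ) :
    !![b + c, 0, lam; -lam * d, c + d, lam ^ 2; -lam ^ 2 * d, -lam * e, lam ^ 3 + e + d] *
        !![0, 1, 0; 0, 0, 1; -c, 0, lam] -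
      !![0, 1, 0; 0, 0, 1; -c, 0, lam] *
        !![a + b, 0, lam; -lam * c, b + c, lam ^ 2; -lam ^ 2 * c, -lam * d, lam ^ 3 + d + c] =
      !![0, 0, 0; 0, 0, 0; -(c * (e + d - b - a)), 0, 0] := by
  ext i j
  fin_cases i <;> fin_cases j <;> simp <;> ring

theorem hasDerivAt_companion_entries_iff (f : ℝ → ℂ) (lam f' : ℂ) (t : ℝ) :
    (∀ i j : Fin 3, HasDerivAt (fun s => !![0, 1, 0; 0, 0, 1; -f s, 0, lam] i j)
        (!![0, 0, 0; 0, 0, 0; -f', 0, 0] i j) t) ↔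
      HasDerivAt f f' t := by
  refine ⟨fun h => ?_, fun h i j => ?_⟩
  · have h20 : HasDerivAt (fun s => -f s) (-f') t := by simpa using h 2 0
    simpa using h20.fun_neg
  · fin_cases i <;> fin_cases j <;> simp [hasDerivAt_const, h.fun_neg]

theorem DLR_bogoyavlensky_p2_iff_general
    (u : ℤ → ℝ → ℂ)
    (M 𝒰 : ℂ → ℤ → ℝ → Matrix (Fin 3) (Fin 3) ℂ)
    (hM : ∀ (lam : ℂ) (n : ℤ) (t : ℝ),
      M lam n t = !![0, 1, 0; 0, 0, 1; -u n t, 0, lam])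
    (hU : ∀ (lam : ℂ) (n : ℤ) (t : ℝ),
      𝒰 lam n t =
        !![u (n - 2) t + u (n - 1) t, 0, lam;
           -lam * u n t, u (n - 1) t + u n t, lam ^ 2;
           -lam ^ 2 * u n t, -lam * u (n + 1) t,
             lam ^ 3 + u (n + 1) t + u n t]) :
    (∀ (lam : ℂ) (n : ℤ) (t : ℝ) (i j : Fin 3),
        HasDerivAt (fun s => M lam n s i j)
          ((𝒰 lam (n + 1) t * M lam n t - M lam n t * 𝒰 lam n t) i j) t)
    ↔ (∀ (n : ℤ) (t : ℝ),
        HasDerivAt (u n)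
          (u n t * (u (n + 2) t + u (n + 1) t - u (n - 1) t - u (n - 2) t))
          t) := by
  have hcomm : ∀ lam n t, 𝒰 lam (n + 1) t * M lam n t - M lam n t * 𝒰 lam n t =
      !![0, 0, 0; 0, 0, 0;
        -(u n t * (u (n + 2) t + u (n + 1) t - u (n - 1) t - u (n - 2) t)), 0, 0] := by
    intro lam n t
    rw [hU, hU, hM, show n + 1 - 2 = n - 1 by ring, show n + 1 - 1 = n by ring,
      show n + 1 + 1 = n + 2 by ring]
    exact bogoyavlensky_p2_laxCommutator ..
  simp only [hcomm]
  simp only [hM, hasDerivAt_companion_entries_iff, forall_const]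

/-- For a nowhere-zero, t-differentiable `u : ℤ → ℝ → ℂ`, the Darboux–Lax
equation `∂ₜ M = S(𝒰)·M − M·𝒰` for the 3×3 matrices
`M = [[0,1,0],[0,0,1],[−u,0,λ]]` and
`𝒰 = [[u₋₂+u₋₁, 0, λ],[−λu, u₋₁+u, λ²],[−λ²u, −λu₁, λ³+u₁+u]]`
holds for all `n`, `t` and all `λ ∈ ℂ` if and only if `u` satisfies the
Narita–Itoh–Bogoyavlensky lattice with `p = 2`:
`uₜ = u(u₂ + u₁ − u₋₁ − u₋₂)`. -/
theorem DLR_bogoyavlensky_p2_iff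
    (u : ℤ → ℝ → ℂ)
    (hne : ∀ (n : ℤ) (t : ℝ), u n t ≠ 0)
    (hdiff : ∀ (n : ℤ) (t : ℝ), DifferentiableAt ℝ (u n) t)
    (M 𝒰 : ℂ → ℤ → ℝ → Matrix (Fin 3) (Fin 3) ℂ)
    (hM : ∀ (lam : ℂ) (n : ℤ) (t : ℝ),
      M lam n t = !![0, 1, 0; 0, 0, 1; -u n t, 0, lam])
    (hU : ∀ (lam : ℂ) (n : ℤ) (t : ℝ),
      𝒰 lam n t =
        !![u (n - 2) t + u (n - 1) t, 0, lam;
           -lam * u n t, u (n - 1) t + u n t, lam ^ 2;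
           -lam ^ 2 * u n t, -lam * u (n + 1) t,
             lam ^ 3 + u (n + 1) t + u n t]) :
    (∀ (lam : ℂ) (n : ℤ) (t : ℝ) (i j : Fin 3),
        HasDerivAt (fun s => M lam n s i j)
          ((𝒰 lam (n + 1) t * M lam n t - M lam n t * 𝒰 lam n t) i j) t)
    ↔ (∀ (n : ℤ) (t : ℝ),
        HasDerivAt (u n)
          (u n t * (u (n + 2) t + u (n + 1) t - u (n - 1) t - u (n - 2) t))
          t) :=
  DLR_bogoyavlensky_p2_iff_general u M 𝒰 hM hU
end

section
/- Fix c₁ ∈ ℂ. Let v : ℤ → ℝ → ℂ be nowhere zero and t-differentiable, satisfying for all n, t: ∂_t v(n,t) = ((c₁·v(n,t) − v(n+1,t))/v(n−2,t) + (c₁·v(n+1,t) − v(n+2,t))/v(n−1,t))·v(n,t) + c₁·v(n+2,t). Define u(n,t) := (c₁·v(n+2,t) − v(n+3,t)) / v(n,t). Then u satisfies the Bogoyavlensky lattice with p = 2: ∂_t u(n,t) = u(n,t)·(u(n+2,t)+u(n+1,t)−u(n−1,t)−u(n−2,t)) for all n and t. -/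
/-! In terms of `u`, the modified equation reads `vₜ = v(u₋₂ + u₋₁) + c₁v₂`. Differentiating
`u·v = c₁v₂ − v₃` with this rule at `n`, `n + 2`, `n + 3`, the terms `c₁v₂u` cancel and the relation
`u·v = c₁v₂ − v₃` at `n` and `n + 2` turns the rest into `u·v·(u₂ + u₁ − u₋₁ − u₋₂)`. -/

theorem HasDerivAt.of_mul_eq {𝕜 𝕜' : Type*} [NontriviallyNormedField 𝕜]
    [NontriviallyNormedField 𝕜'] [NormedAlgebra 𝕜 𝕜'] {f g h : 𝕜 → 𝕜'} {g' h' : 𝕜'} {x : 𝕜}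
    (hfg : ∀ y, f y * g y = h y) (hg : HasDerivAt g g' x) (hh : HasDerivAt h h' x)
    (hgx : g x ≠ 0) : HasDerivAt f ((h' - f x * g') / g x) x := by
  have hf : f =ᶠ[nhds x] h / g := by
    filter_upwards [hg.continuousAt.eventually_ne hgx] with y hy
    rw [Pi.div_apply, ← hfg y, mul_div_cancel_right₀ _ hy]
  refine (hh.div hg hgx).congr_of_eventuallyEq hf |>.congr_deriv ?_
  rw [← hfg x]
  field_simp

/-- The formula `u = (c₁v₂ − v₃)/v` is a Miura-type transformation from the
modified equation
`vₜ = ((c₁v − v₁)/v₋₂ + (c₁v₁ − v₂)/v₋₁)·v + c₁v₂`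
to the Bogoyavlensky lattice with `p = 2`: `uₜ = u(u₂ + u₁ − u₋₁ − u₋₂)`. -/
theorem miura_to_bogoyavlensky_p2
    (c₁ : ℂ) (v : ℤ → ℝ → ℂ)
    (hne : ∀ (n : ℤ) (t : ℝ), v n t ≠ 0)
    (hv : ∀ (n : ℤ) (t : ℝ),
      HasDerivAt (v n)
        (((c₁ * v n t - v (n + 1) t) / v (n - 2) t
            + (c₁ * v (n + 1) t - v (n + 2) t) / v (n - 1) t) * v n t
          + c₁ * v (n + 2) t) t)
    (u : ℤ → ℝ → ℂ)
    (hu : ∀ (n : ℤ) (t : ℝ),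
      u n t = (c₁ * v (n + 2) t - v (n + 3) t) / v n t) :
    ∀ (n : ℤ) (t : ℝ),
      HasDerivAt (u n)
        (u n t * (u (n + 2) t + u (n + 1) t - u (n - 1) t - u (n - 2) t))
        t := by
  intro n t
  have hmul : ∀ m s, u m s * v m s = c₁ * v (m + 2) s - v (m + 3) s := fun m s => by
    rw [hu, div_mul_cancel₀ _ (hne m s)]
  have hvu : ∀ m, HasDerivAt (v m) (v m t * (u (m - 2) t + u (m - 1) t) + c₁ * v (m + 2) t) t :=
    fun m => (hv m t).congr_deriv (by simp only [hu]; ring_nf)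
  have hv₂ := hvu (n + 2)
  have hv₃ := hvu (n + 3)
  have hmul₂ := hmul (n + 2) t
  norm_num [add_assoc, add_sub_assoc] at hv₂ hv₃ hmul₂
  refine (HasDerivAt.of_mul_eq (hmul n) (hvu n) ((hv₂.const_mul c₁).sub hv₃)
    (hne n t)).congr_deriv ?_
  rw [div_eq_iff (hne n t)]
  linear_combination -(u (n + 1) t + u (n + 2) t) * hmul n t - c₁ * hmul₂
end

section
/- Fix c₁ ∈ ℂ. Let v : ℤ → ℝ → ℂ be t-differentiable, satisfying for all n, t: ∂_t v(n,t) = v(n,t)·(c₁+v(n,t))·((c₁+v(n−2,t))·(c₁+v(n−1,t)) − (c₁+v(n+1,t))·(c₁+v(n+2,t))). Define u(n,t) := −v(n+2,t)·(c₁+v(n,t))·(c₁+v(n+1,t)). Then u satisfies the Bogoyavlensky lattice with p = 2: ∂_t u(n,t) = u(n,t)·(u(n+2,t)+u(n+1,t)−u(n−1,t)−u(n−2,t)) for all n and t. -/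
/-!
The Miura map `u = −v₂(c+v)(c+v₁)` is a polynomial in finitely many lattice values, so by the
product rule `uₜ` is its linearization applied to `vₜ`. Substituting the modified lattice for `vₜ`
turns this into a polynomial identity in `v₋₂, …, v₄`, which is exactly the Bogoyavlensky
right-hand side of `u`.
-/

section Algebra

variable {R : Type*} [CommRing R]

def miura (c : R) (v : ℤ → R) (n : ℤ) : R :=
  -v (n + 2) * (c + v n) * (c + v (n + 1))

def miuraLinearization (c : R) (v w : ℤ → R) (n : ℤ) : R :=
  -w (n + 2) * (c + v n) * (c + v (n + 1)) - v (n + 2) * w n * (c + v (n + 1))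
    - v (n + 2) * (c + v n) * w (n + 1)

def modifiedBogoyavlenskyField (c : R) (v : ℤ → R) (n : ℤ) : R :=
  v n * (c + v n) * ((c + v (n - 2)) * (c + v (n - 1)) - (c + v (n + 1)) * (c + v (n + 2)))

def bogoyavlenskyField (u : ℤ → R) (n : ℤ) : R :=
  u n * (u (n + 2) + u (n + 1) - u (n - 1) - u (n - 2))

theorem miuraLinearization_modifiedBogoyavlenskyField (c : R) (v : ℤ → R) (n : ℤ) :
    miuraLinearization c v (modifiedBogoyavlenskyField c v) n
      = bogoyavlenskyField (miura c v) n := by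
  simp only [miuraLinearization, modifiedBogoyavlenskyField, bogoyavlenskyField, miura]
  ring_nf

end Algebra

theorem hasDerivAt_miura {𝕜 𝔸 : Type*} [NontriviallyNormedField 𝕜] [NormedCommRing 𝔸]
    [NormedAlgebra 𝕜 𝔸] (c : 𝔸) (v : ℤ → 𝕜 → 𝔸) (w : ℤ → 𝔸) (t : 𝕜)
    (hv : ∀ k, HasDerivAt (v k) (w k) t) (n : ℤ) :
    HasDerivAt (fun s => miura c (fun k => v k s) n)
      (miuraLinearization c (fun k => v k t) w n) t := by
  have h := ((hv (n + 2)).neg.mul ((hv n).const_add c)).mul ((hv (n + 1)).const_add c)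
  convert h using 1
  · rfl
  · simp only [miuraLinearization, Pi.mul_apply, Pi.neg_apply]
    ring

/-- The formula `u = −v₂(c₁+v)(c₁+v₁)` is a Miura-type transformation from the
modified equation
`vₜ = v(c₁+v)((c₁+v₋₂)(c₁+v₋₁) − (c₁+v₁)(c₁+v₂))`
to the Bogoyavlensky lattice with `p = 2`: `uₜ = u(u₂ + u₁ − u₋₁ − u₋₂)`. -/
theorem miura_projective_to_bogoyavlensky_p2
    (c₁ : ℂ) (v : ℤ → ℝ → ℂ)
    (hv : ∀ (n : ℤ) (t : ℝ),
      HasDerivAt (v n)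
        (v n t * (c₁ + v n t) *
          ((c₁ + v (n - 2) t) * (c₁ + v (n - 1) t)
            - (c₁ + v (n + 1) t) * (c₁ + v (n + 2) t))) t)
    (u : ℤ → ℝ → ℂ)
    (hu : ∀ (n : ℤ) (t : ℝ),
      u n t = -(v (n + 2) t) * (c₁ + v n t) * (c₁ + v (n + 1) t)) :
    ∀ (n : ℤ) (t : ℝ),
      HasDerivAt (u n)
        (u n t * (u (n + 2) t + u (n + 1) t - u (n - 1) t - u (n - 2) t))
        t := by
  intro n t
  obtain rfl : u = fun n t => miura c₁ (fun k => v k t) n := funext₂ hu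
  have h := hasDerivAt_miura c₁ v (modifiedBogoyavlenskyField c₁ fun k => v k t) t
    (fun k => hv k t) n
  rwa [miuraLinearization_modifiedBogoyavlenskyField] at h
end

section
/- Fix c₁, c₂ ∈ ℂ. Let v : ℤ → ℝ → ℂ be t-differentiable with v(n,t)·v(n+1,t)·v(n+2,t) ≠ 1 for all n, t, satisfying for all n, t the equation ∂_t v = v·(v₋₂v₋₁ − v₁v₂)·(c₂ − c₁v)·(c₂vv₋₁ − c₁)·(c₂vv₁ − c₁) / ((vv₋₂v₋₁ − 1)·(vv₋₁v₁ − 1)·(vv₁v₂ − 1)), where v_k(n,t) := v(n+k,t). Define u(n,t) := v₂v₃·(c₁v₄ − c₂)·(c₂vv₁ − c₁)·(c₂v₁v₂ − c₁) / ((vv₁v₂ − 1)·(v₁v₂v₃ − 1)·(v₂v₃v₄ − 1)) (evaluated at (n,t)). Then u satisfies the Bogoyavlensky lattice with p = 2: ∂_t u(n,t) = u(n,t)·(u(n+2,t)+u(n+1,t)−u(n−1,t)−u(n−2,t)) for all n and t. Thus this is a Miura-type transformation of order 4 to the Bogoyavlensky lattice with p = 2. -/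
/-!
The transformation factors through `w = (c₂vv₁ − c₁)/(vv₁v₂ − 1)`. By the quotient rule and a
rational-function identity, `w` solves the modified Bogoyavlensky lattice
`wₜ = w(c₁ − w)(w₁w₂ − w₋₁w₋₂)`, and `u = ww₁(c₁ − w₂)`; the latter is a polynomial Miura map from
the modified lattice to the Bogoyavlensky lattice with `p = 2`, checked by the product rule.
-/

noncomputable section

namespace BogoyavlenskyMiura

variable (c₁ c₂ : ℂ)

/-- The right-hand side of the `v`-equation at site `n`, for the configuration `y = v(·, t)`. -/
def vRhs (y : ℤ → ℂ) (n : ℤ) : ℂ :=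
  y n * (y (n - 2) * y (n - 1) - y (n + 1) * y (n + 2))
      * (c₂ - c₁ * y n)
      * (c₂ * y n * y (n - 1) - c₁)
      * (c₂ * y n * y (n + 1) - c₁)
    / ((y n * y (n - 2) * y (n - 1) - 1)
        * (y n * y (n - 1) * y (n + 1) - 1)
        * (y n * y (n + 1) * y (n + 2) - 1))

def wOf (y : ℤ → ℂ) (n : ℤ) : ℂ :=
  (c₂ * y n * y (n + 1) - c₁) / (y n * y (n + 1) * y (n + 2) - 1)

def uOf (y : ℤ → ℂ) (n : ℤ) : ℂ :=
  y (n + 2) * y (n + 3)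
      * (c₁ * y (n + 4) - c₂)
      * (c₂ * y n * y (n + 1) - c₁)
      * (c₂ * y (n + 1) * y (n + 2) - c₁)
    / ((y n * y (n + 1) * y (n + 2) - 1)
        * (y (n + 1) * y (n + 2) * y (n + 3) - 1)
        * (y (n + 2) * y (n + 3) * y (n + 4) - 1))

def SolvesModifiedBogoyavlensky (w : ℤ → ℝ → ℂ) : Prop :=
  ∀ n t, HasDerivAt (w n)
    (w n t * (c₁ - w n t) * (w (n + 1) t * w (n + 2) t - w (n - 1) t * w (n - 2) t)) t

def SolvesBogoyavlensky₂ (u : ℤ → ℝ → ℂ) : Prop :=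
  ∀ n t, HasDerivAt (u n) (u n t * (u (n + 2) t + u (n + 1) t - u (n - 1) t - u (n - 2) t)) t

theorem uOf_eq_wOf {y : ℤ → ℂ} (hy : ∀ m, y m * y (m + 1) * y (m + 2) ≠ 1) (n : ℤ) :
    uOf c₁ c₂ y n = wOf c₁ c₂ y n * wOf c₁ c₂ y (n + 1) * (c₁ - wOf c₁ c₂ y (n + 2)) := by
  have h₀ := sub_ne_zero.mpr (hy n)
  have h₁ := sub_ne_zero.mpr (hy (n + 1))
  have h₂ := sub_ne_zero.mpr (hy (n + 2))
  simp only [uOf, wOf, add_assoc, Int.reduceAdd] at *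
  field_simp
  ring

theorem wOf_quotient_rule {y : ℤ → ℂ} (hy : ∀ m, y m * y (m + 1) * y (m + 2) ≠ 1) (n : ℤ) :
    ((c₂ * vRhs c₁ c₂ y n * y (n + 1) + c₂ * y n * vRhs c₁ c₂ y (n + 1))
          * (y n * y (n + 1) * y (n + 2) - 1)
        - (c₂ * y n * y (n + 1) - c₁)
          * ((vRhs c₁ c₂ y n * y (n + 1) + y n * vRhs c₁ c₂ y (n + 1)) * y (n + 2)
            + y n * y (n + 1) * vRhs c₁ c₂ y (n + 2)))
        / (y n * y (n + 1) * y (n + 2) - 1) ^ 2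
      = wOf c₁ c₂ y n * (c₁ - wOf c₁ c₂ y n)
          * (wOf c₁ c₂ y (n + 1) * wOf c₁ c₂ y (n + 2)
            - wOf c₁ c₂ y (n - 1) * wOf c₁ c₂ y (n - 2)) := by
  have hP : ∀ m, y m * y (m + 1) * y (m + 2) - 1 ≠ 0 := fun m => sub_ne_zero.mpr (hy m)
  have h₀ := hP (n - 2)
  have h₁ := hP (n - 1)
  have h₂ := hP n
  have h₃ := hP (n + 1)
  have h₄ := hP (n + 2)
  simp only [vRhs, wOf] at *
  simp only [Int.sub_eq_add_neg, add_assoc, Int.reduceAdd, Int.reduceNeg, add_zero] at *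
  -- the `v`-equation lists the factors of its denominators in a different order
  have r₀ : y n * y (n + -2) * y (n + -1) - 1 ≠ 0 := by rwa [mul_rotate]
  have r₁ : y (n + 1) * y (n + -1) * y n - 1 ≠ 0 := by rwa [mul_rotate]
  have r₂ : y (n + 2) * y n * y (n + 1) - 1 ≠ 0 := by rwa [mul_rotate]
  have s₁ : y n * y (n + -1) * y (n + 1) - 1 ≠ 0 := by rwa [mul_comm (y n)]
  have s₂ : y (n + 1) * y n * y (n + 2) - 1 ≠ 0 := by rwa [mul_comm (y (n + 1))]
  have s₃ : y (n + 2) * y (n + 1) * y (n + 3) - 1 ≠ 0 := by rwa [mul_comm (y (n + 2))]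
  field_simp
  ring

theorem solvesModifiedBogoyavlensky_wOf {v : ℤ → ℝ → ℂ}
    (hne : ∀ n t, v n t * v (n + 1) t * v (n + 2) t ≠ 1)
    (hv : ∀ n t, HasDerivAt (v n) (vRhs c₁ c₂ (fun k => v k t) n) t) :
    SolvesModifiedBogoyavlensky c₁ fun n t => wOf c₁ c₂ (fun k => v k t) n := by
  intro n t
  have hQ := (((hv n t).const_mul c₂).mul (hv (n + 1) t)).sub_const c₁
  have hP := (((hv n t).mul (hv (n + 1) t)).mul (hv (n + 2) t)).sub_const 1
  exact (hQ.div hP (sub_ne_zero.mpr (hne n t))).congr_deriv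
    (wOf_quotient_rule c₁ c₂ (fun m => hne m t) n)

theorem solvesBogoyavlensky₂_of_modified {w u : ℤ → ℝ → ℂ}
    (hw : SolvesModifiedBogoyavlensky c₁ w)
    (hu : ∀ n t, u n t = w n t * w (n + 1) t * (c₁ - w (n + 2) t)) :
    SolvesBogoyavlensky₂ u := by
  intro n t
  simp only [hu]
  rw [show u n = fun s => w n s * w (n + 1) s * (c₁ - w (n + 2) s) from funext (hu n)]
  refine (((hw n t).mul (hw (n + 1) t)).mul ((hw (n + 2) t).const_sub c₁)).congr_deriv ?_
  simp only [Pi.mul_apply]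
  ring_nf

end BogoyavlenskyMiura

end

/-- The order-4 Miura-type transformation
`u = v₂v₃(c₁v₄ − c₂)(c₂vv₁ − c₁)(c₂v₁v₂ − c₁)/((vv₁v₂ − 1)(v₁v₂v₃ − 1)(v₂v₃v₄ − 1))`
maps solutions of the modified equation
`vₜ = v(v₋₂v₋₁ − v₁v₂)(c₂ − c₁v)(c₂vv₋₁ − c₁)(c₂vv₁ − c₁)
      /((vv₋₂v₋₁ − 1)(vv₋₁v₁ − 1)(vv₁v₂ − 1))`
to solutions of the Bogoyavlensky lattice with `p = 2`:
`uₜ = u(u₂ + u₁ − u₋₁ − u₋₂)`. -/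
theorem miura_order4_to_bogoyavlensky_p2
    (c₁ c₂ : ℂ) (v : ℤ → ℝ → ℂ)
    (hne : ∀ (n : ℤ) (t : ℝ), v n t * v (n + 1) t * v (n + 2) t ≠ 1)
    (hv : ∀ (n : ℤ) (t : ℝ),
      HasDerivAt (v n)
        (v n t * (v (n - 2) t * v (n - 1) t - v (n + 1) t * v (n + 2) t)
            * (c₂ - c₁ * v n t)
            * (c₂ * v n t * v (n - 1) t - c₁)
            * (c₂ * v n t * v (n + 1) t - c₁)
          / ((v n t * v (n - 2) t * v (n - 1) t - 1)
              * (v n t * v (n - 1) t * v (n + 1) t - 1)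
              * (v n t * v (n + 1) t * v (n + 2) t - 1))) t)
    (u : ℤ → ℝ → ℂ)
    (hu : ∀ (n : ℤ) (t : ℝ),
      u n t = v (n + 2) t * v (n + 3) t
          * (c₁ * v (n + 4) t - c₂)
          * (c₂ * v n t * v (n + 1) t - c₁)
          * (c₂ * v (n + 1) t * v (n + 2) t - c₁)
        / ((v n t * v (n + 1) t * v (n + 2) t - 1)
            * (v (n + 1) t * v (n + 2) t * v (n + 3) t - 1)
            * (v (n + 2) t * v (n + 3) t * v (n + 4) t - 1))) :
    ∀ (n : ℤ) (t : ℝ),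
      HasDerivAt (u n)
        (u n t * (u (n + 2) t + u (n + 1) t - u (n - 1) t - u (n - 2) t))
        t :=
  BogoyavlenskyMiura.solvesBogoyavlensky₂_of_modified c₁
    (BogoyavlenskyMiura.solvesModifiedBogoyavlensky_wOf c₁ c₂ hne hv)
    fun n t => (hu n t).trans (BogoyavlenskyMiura.uOf_eq_wOf c₁ c₂ (fun m => hne m t) n)
end

section
/- Fix p ∈ ℤ_{>0} and c₁, c₂ ∈ ℂ. Let v : ℤ → ℝ → ℂ be t-differentiable with ∏_{j=i}^{i+p} v_j(n,t) ≠ 1 for all i ∈ ℤ and all n, t (where v_k(n,t) := v(n+k,t)), satisfying for all n, t: ∂_t v = v·(c₂ − c₁v)·(∏_{i=1}^p v_{−i} − ∏_{i=1}^p v_i)·∏_{i=0}^{p−1}(c₂·(∏_{j=i+1−p}^{i} v_j) − c₁) / ∏_{i=0}^{p}(−1 + ∏_{j=i−p}^{i} v_j). Define u(n,t) := (c₁·v_{2p} − c₂)·(∏_{j=p}^{2p−1} v_j)·∏_{i=0}^{p−1}(c₂·(∏_{j=i}^{i+p−1} v_j) − c₁) / ∏_{i=0}^{p}(−1 + ∏_{j=i}^{i+p}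 v_j) (evaluated at (n,t)). Then u satisfies the Narita–Itoh–Bogoyavlensky lattice: ∂_t u(n,t) = u(n,t)·(∑_{k=1}^p u(n+k,t) − ∑_{k=1}^p u(n−k,t)) for all n and t. -/
/-! The transformation factors through the modified lattice
`w_t = w (c₁ - w) (∏_{l<p} w_{j+1+l} - ∏_{l<p} w_{j-p+l})`: the source equation makes
`w_j = (c₂ Q_j - c₁) / (-1 + P_j)` a solution of it, where `Q_j` and `P_j` are the products of
`p` and `p + 1` consecutive values of `v` starting at `j`, and then
`u_j = (∏_{l<p} w_{j+l}) (c₁ - w_{j+p})` solves the Narita–Itoh–Bogoyavlensky lattice.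
Both steps are computations with logarithmic derivatives. The source equation says
`v_j'/v_j = R_{j+1} - R_j` for an explicit flux `R`, so the logarithmic derivative of a product of
consecutive values of `v` telescopes; in the second step the logarithmic derivatives of
`∏_{l<p} w_{j+l}` and `∏_{l≤p} w_{j+l}` differ from the NIB right-hand side by boundary terms that
cancel because both ways of splitting `∏_{l≤2p} w_{j+l}` agree. -/

open Finset

section Window

variable {M : Type*} [CommMonoid M] (f : ℤ → M)

def window (K : ℕ) (j : ℤ) : M := ∏ l ∈ range K, f (j + l)

theorem window_succ (K : ℕ) (j : ℤ) : window f (K + 1) j = window f K j * f (j + K) :=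
  prod_range_succ _ _

theorem window_add (K L : ℕ) (j : ℤ) :
    window f (K + L) j = window f K j * window f L (j + K) := by
  simp only [window, prod_range_add, Nat.cast_add, add_assoc]

theorem window_succ' (K : ℕ) (j : ℤ) : window f (K + 1) j = f j * window f K (j + 1) := by
  rw [add_comm K, window_add]
  simp [window]

theorem window_mul_window_succ_comm (K : ℕ) (j : ℤ) :
    window f K j * window f (K + 1) (j + K) = window f (K + 1) j * window f K (j + K + 1) := by
  rw [← window_add, show j + K + 1 = j + ((K + 1 : ℕ) : ℤ) by push_cast; ring, ← window_add,
    Nat.add_comm]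

theorem prod_range_sub_add_one (K : ℕ) (j : ℤ) :
    ∏ l ∈ range K, f (j - (l + 1)) = window f K (j - K) := by
  rw [window, ← prod_range_reflect]
  refine prod_congr rfl fun l hl => ?_
  rw [mem_range] at hl
  congr 1
  omega

theorem sum_range_sub_add_one {A : Type*} [AddCommMonoid A] (g : ℤ → A) (K : ℕ) (j : ℤ) :
    ∑ l ∈ range K, g (j - (l + 1)) = ∑ l ∈ range K, g (j - K + l) := by
  rw [← sum_range_reflect]
  refine sum_congr rfl fun l hl => ?_
  rw [mem_range] at hl
  congr 1
  omega

theorem window_div {G : Type*} [DivisionCommMonoid G] (f g : ℤ → G) (K : ℕ) (j : ℤ) :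
    window (fun i => f i / g i) K j = window f K j / window g K j :=
  prod_div_distrib ..

theorem window_ne_zero {M₀ : Type*} [CommMonoidWithZero M₀] [NoZeroDivisors M₀] [Nontrivial M₀]
    {f : ℤ → M₀} (hf : ∀ j, f j ≠ 0) (K : ℕ) (j : ℤ) : window f K j ≠ 0 :=
  prod_ne_zero_iff.mpr fun _ _ => hf _

end Window

section WindowDeriv

variable {𝕜 𝔸 : Type*} [NontriviallyNormedField 𝕜] [NormedCommRing 𝔸] [NormedAlgebra 𝕜 𝔸]
  {v : ℤ → 𝕜 → 𝔸} {t : 𝕜}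

theorem hasDerivAt_window {g : ℤ → 𝔸} (hv : ∀ j, HasDerivAt (v j) (v j t * g j) t)
    (K : ℕ) (j : ℤ) :
    HasDerivAt (fun s => window (v · s) K j) (window (v · t) K j * ∑ l ∈ range K, g (j + l)) t := by
  refine (HasDerivAt.fun_finsetProd (u := range K) fun l _ => hv (j + l)).congr_deriv ?_
  rw [window, mul_sum]
  refine sum_congr rfl fun l hl => ?_
  rw [smul_eq_mul, ← mul_assoc, prod_erase_mul _ _ hl]

theorem hasDerivAt_window_of_telescoping {F : ℤ → 𝔸}
    (hv : ∀ j, HasDerivAt (v j) (v j t * (F (j + 1) - F j)) t) (K : ℕ) (j : ℤ) :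
    HasDerivAt (fun s => window (v · s) K j) (window (v · t) K j * (F (j + K) - F j)) t := by
  convert hasDerivAt_window hv K j using 2
  have := sum_range_sub (fun l : ℕ => F (j + l)) K
  push_cast at this
  simpa only [add_zero, add_assoc] using this.symm

end WindowDeriv

def IsNIBSolution (p : ℕ) (u : ℤ → ℝ → ℂ) : Prop :=
  ∀ (n : ℤ) (t : ℝ), HasDerivAt (u n)
    (u n t * ((∑ k ∈ range p, u (n + (k + 1)) t) - ∑ k ∈ range p, u (n - (k + 1)) t)) t

def IsModifiedNIBSolution (p : ℕ) (c : ℂ) (w : ℤ → ℝ → ℂ) : Prop :=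
  ∀ (j : ℤ) (t : ℝ), HasDerivAt (w j)
    (w j t * (c - w j t) * (window (w · t) p (j + 1) - window (w · t) p (j - p))) t

def modifiedToNIB (p : ℕ) (c : ℂ) (w : ℤ → ℝ → ℂ) (j : ℤ) (t : ℝ) : ℂ :=
  window (w · t) p j * (c - w (j + p) t)

theorem modifiedToNIB_eq_sub (p : ℕ) (c : ℂ) (w : ℤ → ℝ → ℂ) (j : ℤ) (t : ℝ) :
    modifiedToNIB p c w j t = c * window (w · t) p j - window (w · t) (p + 1) j := by
  rw [modifiedToNIB, window_succ]
  ring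

theorem sum_range_sub_mul_window_sub (p : ℕ) (c : ℂ) (w : ℤ → ℝ → ℂ) (n : ℤ) (t : ℝ) :
    ∑ l ∈ range p,
      (c - w (n + l) t) * (window (w · t) p (n + l + 1) - window (w · t) p (n + l - p))
    = (∑ k ∈ range p, modifiedToNIB p c w (n + (k + 1)) t
        - ∑ k ∈ range p, modifiedToNIB p c w (n - (k + 1)) t)
      + (window (w · t) (p + 1) (n + p) - window (w · t) (p + 1) n) := by
  have hsplit : ∀ k : ℤ, (c - w k t) * (window (w · t) p (k + 1) - window (w · t) p (k - p))
      = (modifiedToNIB p c w (k + 1) t - modifiedToNIB p c w (k - p) t)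
        + (window (w · t) (p + 1) (k + 1) - window (w · t) (p + 1) k) := by
    intro k
    simp only [modifiedToNIB_eq_sub, window_succ' _ _ k, window_succ _ _ (k - p), sub_add_cancel]
    ring
  have htel := sum_range_sub (fun l : ℕ => window (w · t) (p + 1) (n + l)) p
  push_cast at htel
  rw [sum_congr rfl fun (l : ℕ) _ => hsplit (n + l), sum_add_distrib, sum_sub_distrib,
    sum_sub_distrib, sum_range_sub_add_one (modifiedToNIB p c w · t)]
  simp only [sum_sub_distrib, add_zero, add_assoc, sub_add_eq_add_sub] at htel ⊢
  linear_combination htel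

namespace IsModifiedNIBSolution

variable {p : ℕ} {c : ℂ} {w : ℤ → ℝ → ℂ}

theorem hasDerivAt_window (hw : IsModifiedNIBSolution p c w) (K : ℕ) (j : ℤ) (t : ℝ) :
    HasDerivAt (fun s => window (w · s) K j) (window (w · t) K j * ∑ l ∈ range K,
      (c - w (j + l) t) * (window (w · t) p (j + l + 1) - window (w · t) p (j + l - p))) t :=
  _root_.hasDerivAt_window (fun i => (hw i t).congr_deriv (mul_assoc _ _ _)) K j

theorem isNIBSolution (hw : IsModifiedNIBSolution p c w) :
    IsNIBSolution p (modifiedToNIB p c w) := by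
  intro n t
  rw [show modifiedToNIB p c w n = fun s => c * window (w · s) p n - window (w · s) (p + 1) n
    from funext (modifiedToNIB_eq_sub p c w n)]
  refine (((hw.hasDerivAt_window p n t).const_mul c).sub
    (hw.hasDerivAt_window (p + 1) n t)).congr_deriv ?_
  have hcomm := window_mul_window_succ_comm (w · t) p n
  have hN := window_succ (w · t) p n
  rw [sum_range_succ, sum_range_sub_mul_window_sub, add_sub_cancel_right]
  beta_reduce
  rw [hN] at hcomm ⊢
  linear_combination (c - w (n + p) t) * hcomm

end IsModifiedNIBSolution

noncomputable section MiuraFromSource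

variable (p : ℕ) (c₁ c₂ : ℂ) (v : ℤ → ℝ → ℂ)

def miuraNum (j : ℤ) (t : ℝ) : ℂ := c₂ * window (v · t) p j - c₁

def miuraDen (j : ℤ) (t : ℝ) : ℂ := -1 + window (v · t) (p + 1) j

def miuraVar (j : ℤ) (t : ℝ) : ℂ := miuraNum p c₁ c₂ v j t / miuraDen p v j t

def miuraFlux (j : ℤ) (t : ℝ) : ℂ :=
  window (miuraVar p c₁ c₂ v · t) p (j - p) * miuraNum p c₁ c₂ v j t

variable {p v}

theorem miuraDen_ne_zero (hP : ∀ j t, window (v · t) (p + 1) j ≠ 1) (j : ℤ) (t : ℝ) :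
    miuraDen p v j t ≠ 0 := by
  rw [miuraDen, neg_add_eq_sub]
  exact sub_ne_zero.mpr (hP j t)

theorem miuraFlux_eq_window_succ_mul (hP : ∀ j t, window (v · t) (p + 1) j ≠ 1)
    (j : ℤ) (t : ℝ) :
    miuraFlux p c₁ c₂ v j t
      = window (miuraVar p c₁ c₂ v · t) (p + 1) (j - p) * miuraDen p v j t := by
  rw [miuraFlux, window_succ, sub_add_cancel, mul_assoc, miuraVar,
    div_mul_cancel₀ _ (miuraDen_ne_zero hP j t)]

theorem window_miuraVar (K : ℕ) (j : ℤ) (t : ℝ) :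
    window (miuraVar p c₁ c₂ v · t) K j
      = window (miuraNum p c₁ c₂ v · t) K j / window (miuraDen p v · t) K j :=
  window_div _ _ K j

theorem source_rhs_eq_mul_miuraFlux_sub (hP : ∀ j t, window (v · t) (p + 1) j ≠ 1)
    (j : ℤ) (t : ℝ) :
    v j t * (c₂ - c₁ * v j t)
        * ((∏ i ∈ Finset.range p, v (j - (i + 1)) t)
            - ∏ i ∈ Finset.range p, v (j + (i + 1)) t)
        * (∏ i ∈ Finset.range p,
            (c₂ * (∏ k ∈ Finset.range p, v (j + i + 1 - p + k) t) - c₁))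
      / ∏ i ∈ Finset.range (p + 1),
          (-1 + ∏ k ∈ Finset.range (p + 1), v (j + i - p + k) t)
    = v j t * (miuraFlux p c₁ c₂ v (j + 1) t - miuraFlux p c₁ c₂ v j t) := by
  have hback : ∏ i ∈ range p, v (j - (i + 1)) t = window (v · t) p (j - p) :=
    prod_range_sub_add_one (v · t) p j
  have hfwd : ∏ i ∈ range p, v (j + (i + 1)) t = window (v · t) p (j + 1) := by
    refine prod_congr rfl fun i _ => ?_
    congr 1
    ring
  have hnum : ∏ i ∈ range p, (c₂ * (∏ k ∈ range p, v (j + i + 1 - p + k) t) - c₁)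
      = window (miuraNum p c₁ c₂ v · t) p (j - p + 1) := by
    refine prod_congr rfl fun i _ => ?_
    dsimp only [miuraNum, window]
    congr 2
    refine prod_congr rfl fun k _ => ?_
    congr 1
    ring
  have hden : ∏ i ∈ range (p + 1), (-1 + ∏ k ∈ range (p + 1), v (j + i - p + k) t)
      = window (miuraDen p v · t) (p + 1) (j - p) := by
    refine prod_congr rfl fun i _ => ?_
    dsimp only [miuraDen, window]
    congr 1
    refine prod_congr rfl fun k _ => ?_
    congr 1
    ring
  have hkey : (c₂ - c₁ * v j t) * (window (v · t) p (j - p) - window (v · t) p (j + 1))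
      = miuraNum p c₁ c₂ v (j + 1) t * miuraDen p v (j - p) t
        - miuraNum p c₁ c₂ v (j - p) t * miuraDen p v j t := by
    rw [miuraNum, miuraNum, miuraDen, miuraDen, window_succ (v · t) p (j - p), sub_add_cancel,
      window_succ' (v · t) p j]
    ring
  have hden₀ := miuraDen_ne_zero hP (j - p) t
  have hden₁ := window_ne_zero (miuraDen_ne_zero hP · t) p (j - p + 1)
  rw [hback, hfwd, hnum, hden, miuraFlux, miuraFlux_eq_window_succ_mul c₁ c₂ hP,
    window_succ' (miuraDen p v · t), window_succ' (miuraVar p c₁ c₂ v · t),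
    show j + 1 - (p : ℤ) = j - p + 1 by ring, window_miuraVar, miuraVar]
  field_simp
  linear_combination (v j t * window (miuraNum p c₁ c₂ v · t) p (j - p + 1)) * hkey

theorem isModifiedNIBSolution_miuraVar (hP : ∀ j t, window (v · t) (p + 1) j ≠ 1)
    (hv : ∀ j t, HasDerivAt (v j)
      (v j t * (miuraFlux p c₁ c₂ v (j + 1) t - miuraFlux p c₁ c₂ v j t)) t) :
    IsModifiedNIBSolution p c₁ (miuraVar p c₁ c₂ v) := by
  intro j t
  have hQ := hasDerivAt_window_of_telescoping (F := (miuraFlux p c₁ c₂ v · t)) (hv · t) p j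
  have hP' := hasDerivAt_window_of_telescoping (F := (miuraFlux p c₁ c₂ v · t)) (hv · t) (p + 1) j
  have hnum := (hQ.const_mul c₂).sub_const c₁
  have hden := hP'.const_add (-1)
  refine (hnum.div hden (miuraDen_ne_zero hP j t)).congr_deriv ?_
  have hcomm := window_mul_window_succ_comm (v · t) p j
  have hden₀ := miuraDen_ne_zero hP j t
  rw [miuraFlux_eq_window_succ_mul c₁ c₂ hP (j + p), add_sub_cancel_right,
    window_succ' (miuraVar p c₁ c₂ v · t), miuraFlux, miuraFlux, Nat.cast_succ,
    show j + (p + 1) - p = j + 1 by ring]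
  generalize window (miuraVar p c₁ c₂ v · t) p (j + 1) = X
  generalize window (miuraVar p c₁ c₂ v · t) p (j - p) = Y
  simp only [miuraVar, miuraNum, miuraDen, ← add_assoc] at hden₀ ⊢
  field_simp
  linear_combination c₂ * (c₂ * window (v · t) p j - c₁) * X * hcomm

theorem modifiedToNIB_miuraVar (hP : ∀ j t, window (v · t) (p + 1) j ≠ 1) (n : ℤ) (t : ℝ) :
    modifiedToNIB p c₁ (miuraVar p c₁ c₂ v) n t
      = (c₁ * v (n + 2 * p) t - c₂) * window (v · t) p (n + p)
          * window (miuraNum p c₁ c₂ v · t) p n / window (miuraDen p v · t) (p + 1) n := by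
  have hkey : c₁ * miuraDen p v (n + p) t - miuraNum p c₁ c₂ v (n + p) t
      = (c₁ * v (n + 2 * p) t - c₂) * window (v · t) p (n + p) := by
    rw [miuraNum, miuraDen, window_succ, show n + p + p = n + 2 * (p : ℤ) by ring]
    ring
  have hden₀ := miuraDen_ne_zero hP (n + p) t
  have hden₁ := window_ne_zero (miuraDen_ne_zero hP · t) p n
  rw [modifiedToNIB, window_miuraVar, miuraVar, window_succ (miuraDen p v · t)]
  field_simp
  linear_combination window (miuraNum p c₁ c₂ v · t) p n * hkey

end MiuraFromSource

theorem miura_to_bogoyavlensky_general_p_general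
    (p : ℕ) (c₁ c₂ : ℂ) (v : ℤ → ℝ → ℂ)
    (hne : ∀ (i n : ℤ) (t : ℝ),
      (∏ j ∈ Finset.range (p + 1), v (n + i + j) t) ≠ 1)
    (hv : ∀ (n : ℤ) (t : ℝ),
      HasDerivAt (v n)
        (v n t * (c₂ - c₁ * v n t)
            * ((∏ i ∈ Finset.range p, v (n - (i + 1)) t)
                - ∏ i ∈ Finset.range p, v (n + (i + 1)) t)
            * (∏ i ∈ Finset.range p,
                (c₂ * (∏ j ∈ Finset.range p, v (n + i + 1 - p + j) t) - c₁))
          / ∏ i ∈ Finset.range (p + 1),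
              (-1 + ∏ j ∈ Finset.range (p + 1), v (n + i - p + j) t)) t)
    (u : ℤ → ℝ → ℂ)
    (hu : ∀ (n : ℤ) (t : ℝ),
      u n t = (c₁ * v (n + 2 * p) t - c₂)
          * (∏ j ∈ Finset.range p, v (n + p + j) t)
          * (∏ i ∈ Finset.range p,
              (c₂ * (∏ j ∈ Finset.range p, v (n + i + j) t) - c₁))
        / ∏ i ∈ Finset.range (p + 1),
            (-1 + ∏ j ∈ Finset.range (p + 1), v (n + i + j) t)) :
    ∀ (n : ℤ) (t : ℝ),
      HasDerivAt (u n)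
        (u n t * ((∑ k ∈ Finset.range p, u (n + (k + 1)) t)
            - ∑ k ∈ Finset.range p, u (n - (k + 1)) t)) t := by
  have hP : ∀ j t, window (v · t) (p + 1) j ≠ 1 := fun j t => by
    simpa only [window, add_zero] using hne 0 j t
  have hw : IsModifiedNIBSolution p c₁ (miuraVar p c₁ c₂ v) :=
    isModifiedNIBSolution_miuraVar c₁ c₂ hP fun j t =>
      (hv j t).congr_deriv (source_rhs_eq_mul_miuraFlux_sub c₁ c₂ hP j t)
  have hu' : u = modifiedToNIB p c₁ (miuraVar p c₁ c₂ v) := by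
    ext n t
    rw [hu, modifiedToNIB_miuraVar c₁ c₂ hP]
    rfl
  rw [hu']
  exact hw.isNIBSolution

/-- For arbitrary `p ∈ ℤ_{>0}` and `c₁, c₂ ∈ ℂ`, the formula
`u = (c₁v_{2p} − c₂)(∏_{j=p}^{2p−1} v_j)·∏_{i=0}^{p−1}(c₂(∏_{j=i}^{i+p−1} v_j) − c₁)
     / ∏_{i=0}^{p}(−1 + ∏_{j=i}^{i+p} v_j)`
is a Miura-type transformation from the modified equation
`vₜ = v(c₂ − c₁v)(∏_{i=1}^p v_{−i} − ∏_{i=1}^p v_i)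
      ·∏_{i=0}^{p−1}(c₂(∏_{j=i+1−p}^{i} v_j) − c₁) / ∏_{i=0}^{p}(−1 + ∏_{j=i−p}^{i} v_j)`
to the Narita–Itoh–Bogoyavlensky lattice
`uₜ = u(∑_{k=1}^p u_k − ∑_{k=1}^p u_{−k})`. -/
theorem miura_to_bogoyavlensky_general_p
    (p : ℕ) (hp : 0 < p) (c₁ c₂ : ℂ) (v : ℤ → ℝ → ℂ)
    (hne : ∀ (i n : ℤ) (t : ℝ),
      (∏ j ∈ Finset.range (p + 1), v (n + i + j) t) ≠ 1)
    (hv : ∀ (n : ℤ) (t : ℝ),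
      HasDerivAt (v n)
        (v n t * (c₂ - c₁ * v n t)
            * ((∏ i ∈ Finset.range p, v (n - (i + 1)) t)
                - ∏ i ∈ Finset.range p, v (n + (i + 1)) t)
            * (∏ i ∈ Finset.range p,
                (c₂ * (∏ j ∈ Finset.range p, v (n + i + 1 - p + j) t) - c₁))
          / ∏ i ∈ Finset.range (p + 1),
              (-1 + ∏ j ∈ Finset.range (p + 1), v (n + i - p + j) t)) t)
    (u : ℤ → ℝ → ℂ)
    (hu : ∀ (n : ℤ) (t : ℝ),
      u n t = (c₁ * v (n + 2 * p) t - c₂)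
          * (∏ j ∈ Finset.range p, v (n + p + j) t)
          * (∏ i ∈ Finset.range p,
              (c₂ * (∏ j ∈ Finset.range p, v (n + i + j) t) - c₁))
        / ∏ i ∈ Finset.range (p + 1),
            (-1 + ∏ j ∈ Finset.range (p + 1), v (n + i + j) t)) :
    ∀ (n : ℤ) (t : ℝ),
      HasDerivAt (u n)
        (u n t * ((∑ k ∈ Finset.range p, u (n + (k + 1)) t)
            - ∑ k ∈ Finset.range p, u (n - (k + 1)) t)) t :=
  miura_to_bogoyavlensky_general_p_general p c₁ c₂ v hne hv u hu
end

section
/- Fix p ∈ ℤ_{>0} and α, β ∈ ℂ. Let v : ℤ → ℝ → ℂ be t-differentiable with 1 − β·∏_{i=0}^p v(n−i,t) ≠ 0 for all n, t, satisfying for all n, t: ∂_t v = v·(α + βv)·(∏_{i=1}^p v_i − ∏_{i=1}^p v_{−i})·∏_{j=1}^p(1 + α·∏_{i=1}^p v_{j−i}) / ∏_{j=0}^p(1 − β·∏_{i=0}^p v_{j−i}), where v_k(n,t) := v(n+k,t). Define w(n,t) := v(n,t)·(1 + α·∏_{i=1}^p v(n−i,t)) / (1 − β·∏_{i=0}^p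 v(n−i,t)). Then w satisfies ∂_t w(n,t) = w(n,t)·(α + β·w(n,t))·(∏_{i=1}^p w(n+i,t) − ∏_{i=1}^p w(n−i,t)) for all n and t. -/
/-!
At a fixed time write `x = v(·, t)`, `P_m = ∏_{i=1}^p x_{m-i}`, `V_m = ∏_{i=1}^p x_{m+i}`,
`A_m = 1 + αP_m` and `B_m = 1 - βx_mP_m`, so that `w = xA/B` and the equation for `v` reads
`v_t = v h` with `h_m = (α + βx_m)(V_m - P_m) ∏_{j=1}^p A_{m+j} / ∏_{j=0}^p B_{m+j}`.
The velocity `h` telescopes: `h_m = F_{m+1} - F_m` for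
`F_m = ∏_{j=0}^p A_{m+j} · B_{m+p} / ∏_{j=0}^p B_{m+j}`, so the logarithmic derivative
`∑_{i=1}^p h_{n-i}` of `P_n` collapses to `F_n - F_{n-p}`. Differentiating `w = xA/B` gives
`w_t = x(A h + (α + βx)P(F_n - F_{n-p}))/B²`, while `w(α + βw) = xA(α + βx)/B²`; finally
`A h + (α + βx)P F_n = A(α + βx) ∏ w_{n+i}` and `P F_{n-p} = A ∏ w_{n-i}`.
-/

open Finset

section WindowProd

variable {M : Type*} [CommMonoid M] (g : ℤ → M)

def windowProd (m : ℤ) (q : ℕ) : M := ∏ i ∈ range q, g (m + i)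

theorem windowProd_succ (m : ℤ) (q : ℕ) :
    windowProd g m (q + 1) = windowProd g m q * g (m + q) :=
  prod_range_succ _ _

theorem windowProd_succ' (m : ℤ) (q : ℕ) :
    windowProd g m (q + 1) = g m * windowProd g (m + 1) q := by
  rw [windowProd, prod_range_succ', mul_comm, windowProd]
  push_cast
  simp only [add_zero, add_assoc, add_comm (1 : ℤ)]

theorem prod_range_add_succ_eq_windowProd (m : ℤ) (q : ℕ) :
    ∏ i ∈ range q, g (m + (i + 1)) = windowProd g (m + 1) q :=
  prod_congr rfl fun i _ => by rw [add_comm (i : ℤ), add_assoc]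

theorem prod_range_sub_succ_eq_windowProd (m : ℤ) (q : ℕ) :
    ∏ i ∈ range q, g (m - (i + 1)) = windowProd g (m - q) q := by
  rw [windowProd, ← prod_range_reflect]
  refine prod_congr rfl fun i hi => congrArg g ?_
  have := mem_range.1 hi
  omega

end WindowProd

theorem HasDerivAt.finsetProd_of_mul {ι 𝕜 𝔸 : Type*} [NontriviallyNormedField 𝕜]
    [NormedCommRing 𝔸] [NormedAlgebra 𝕜 𝔸] {s : Finset ι} {f : ι → 𝕜 → 𝔸} {g : ι → 𝔸}
    {t : 𝕜} (hf : ∀ i ∈ s, HasDerivAt (f i) (f i t * g i) t) :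
    HasDerivAt (fun u => ∏ i ∈ s, f i u) ((∏ i ∈ s, f i t) * ∑ i ∈ s, g i) t := by
  classical
  convert HasDerivAt.fun_finsetProd hf using 1
  rw [mul_sum]
  refine sum_congr rfl fun i hi => ?_
  rw [smul_eq_mul, ← mul_assoc, prod_erase_mul _ _ hi]

noncomputable section

namespace Miura

variable (p : ℕ) (α β : ℂ) (x : ℤ → ℂ)

def backProd (m : ℤ) : ℂ := ∏ i ∈ range p, x (m - (i + 1))

def fwdProd (m : ℤ) : ℂ := ∏ i ∈ range p, x (m + (i + 1))

def numFactor (m : ℤ) : ℂ := 1 + α * backProd p x m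

def denFactor (m : ℤ) : ℂ := 1 - β * ∏ i ∈ range (p + 1), x (m - i)

def transform (m : ℤ) : ℂ := x m * numFactor p α x m / denFactor p β x m

def velocity (m : ℤ) : ℂ :=
  (α + β * x m) * (fwdProd p x m - backProd p x m)
    * (∏ j ∈ range p, numFactor p α x (m + (j + 1)))
    / ∏ j ∈ range (p + 1), denFactor p β x (m + j)

def potential (m : ℤ) : ℂ :=
  windowProd (numFactor p α x) m (p + 1) * denFactor p β x (m + p)
    / windowProd (denFactor p β x) m (p + 1)

theorem prod_range_succ_sub_eq (m : ℤ) :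
    ∏ i ∈ range (p + 1), x (m - i) = x m * backProd p x m := by
  rw [prod_range_succ', mul_comm, backProd]
  push_cast
  simp only [sub_zero]

theorem denFactor_eq (m : ℤ) : denFactor p β x m = 1 - β * (x m * backProd p x m) := by
  rw [denFactor, prod_range_succ_sub_eq]

theorem numFactor_add_succ (m : ℤ) :
    numFactor p α x (m + p + 1) = 1 + α * fwdProd p x m := by
  rw [numFactor, backProd, fwdProd, prod_range_sub_succ_eq_windowProd,
    prod_range_add_succ_eq_windowProd, add_sub_right_comm, add_sub_cancel_right]

theorem denFactor_add (m : ℤ) :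
    denFactor p β x (m + p) = 1 - β * (x m * fwdProd p x m) := by
  have h := prod_range_sub_succ_eq_windowProd x (m + p + 1) (p + 1)
  push_cast at h
  simp only [add_sub_add_right_eq_sub, add_sub_cancel_right] at h
  rw [denFactor, h, windowProd_succ', fwdProd, prod_range_add_succ_eq_windowProd]

variable {p β x}

theorem velocity_eq_potential_sub (hB : ∀ m, denFactor p β x m ≠ 0) (m : ℤ) :
    velocity p α β x m = potential p α β x (m + 1) - potential p α β x m := by
  have hBm : 1 - β * x m * backProd p x m ≠ 0 := by
    rw [mul_assoc, ← denFactor_eq]; exact hB m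
  have hBp := hB (m + p + 1)
  rw [velocity, potential, potential, prod_range_add_succ_eq_windowProd,
    show ∏ j ∈ range (p + 1), denFactor p β x (m + j) = windowProd (denFactor p β x) m (p + 1)
      from rfl,
    windowProd_succ (numFactor p α x) (m + 1), windowProd_succ' (numFactor p α x) m,
    windowProd_succ (denFactor p β x) (m + 1), windowProd_succ' (denFactor p β x) m,
    add_right_comm m 1, numFactor_add_succ, denFactor_add, numFactor, denFactor_eq]
  field_simp
  ring

theorem sum_velocity_eq (hB : ∀ m, denFactor p β x m ≠ 0) (m : ℤ) :
    ∑ i ∈ range p, velocity p α β x (m - (i + 1))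
      = potential p α β x m - potential p α β x (m - p) := by
  have h := sum_range_sub' (fun i : ℕ => potential p α β x (m - i)) p
  simp only [Nat.cast_zero, sub_zero] at h
  rw [← h]
  refine sum_congr rfl fun i _ => ?_
  rw [velocity_eq_potential_sub α hB]
  push_cast
  ring_nf

variable (p β x)

theorem prod_transform_add_succ (m : ℤ) :
    ∏ i ∈ range p, transform p α β x (m + (i + 1))
      = fwdProd p x m * windowProd (numFactor p α x) (m + 1) p
        / windowProd (denFactor p β x) (m + 1) p := by
  simp only [transform]
  rw [prod_div_distrib, prod_mul_distrib, prod_range_add_succ_eq_windowProd (numFactor p α x),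
    prod_range_add_succ_eq_windowProd (denFactor p β x), fwdProd]

theorem prod_transform_sub_succ (m : ℤ) :
    ∏ i ∈ range p, transform p α β x (m - (i + 1))
      = backProd p x m * windowProd (numFactor p α x) (m - p) p
        / windowProd (denFactor p β x) (m - p) p := by
  simp only [transform]
  rw [prod_div_distrib, prod_mul_distrib, prod_range_sub_succ_eq_windowProd (numFactor p α x),
    prod_range_sub_succ_eq_windowProd (denFactor p β x), backProd]

variable {p β x}

theorem transform_mul_add (m : ℤ) (hB : denFactor p β x m ≠ 0) :
    transform p α β x m * (α + β * transform p α β x m)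
      = x m * numFactor p α x m * (α + β * x m) / denFactor p β x m ^ 2 := by
  rw [transform]
  field_simp
  rw [denFactor_eq, numFactor]
  ring

theorem backProd_mul_potential_sub (m : ℤ) (hB : denFactor p β x m ≠ 0) :
    backProd p x m * potential p α β x (m - p)
      = numFactor p α x m * ∏ i ∈ range p, transform p α β x (m - (i + 1)) := by
  rw [prod_transform_sub_succ, potential, windowProd_succ, windowProd_succ, sub_add_cancel,
    mul_div_mul_right _ _ hB]
  ring

theorem numFactor_mul_velocity_add (m : ℤ) (hB : denFactor p β x m ≠ 0) :
    numFactor p α x m * velocity p α β x m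
        + (α + β * x m) * backProd p x m * potential p α β x m
      = numFactor p α x m * (α + β * x m) * ∏ i ∈ range p, transform p α β x (m + (i + 1)) := by
  have hBm : 1 - β * x m * backProd p x m ≠ 0 := by
    rwa [mul_assoc, ← denFactor_eq]
  rw [prod_transform_add_succ, velocity, potential, prod_range_add_succ_eq_windowProd,
    show ∏ j ∈ range (p + 1), denFactor p β x (m + j) = windowProd (denFactor p β x) m (p + 1)
      from rfl,
    windowProd_succ' (numFactor p α x), windowProd_succ' (denFactor p β x), denFactor_add,
    denFactor_eq]
  field_simp
  ring

theorem transform_rate_eq (hB : ∀ m, denFactor p β x m ≠ 0) (n : ℤ) :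
    x n * (numFactor p α x n * velocity p α β x n
        + (α + β * x n) * backProd p x n * ∑ i ∈ range p, velocity p α β x (n - (i + 1)))
        / denFactor p β x n ^ 2
      = transform p α β x n * (α + β * transform p α β x n)
        * (∏ i ∈ range p, transform p α β x (n + (i + 1))
          - ∏ i ∈ range p, transform p α β x (n - (i + 1))) := by
  rw [sum_velocity_eq α hB, transform_mul_add α n (hB n)]
  linear_combination (x n / denFactor p β x n ^ 2) * numFactor_mul_velocity_add α n (hB n)
    - (x n / denFactor p β x n ^ 2) * (α + β * x n) * backProd_mul_potential_sub α n (hB n)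

variable (p β) in
theorem hasDerivAt_transform {v : ℤ → ℝ → ℂ} {h : ℤ → ℂ} {t : ℝ}
    (hv : ∀ k, HasDerivAt (v k) (v k t * h k) t) (n : ℤ)
    (hB : denFactor p β (fun k => v k t) n ≠ 0) :
    HasDerivAt (fun s => transform p α β (fun k => v k s) n)
      (v n t * (numFactor p α (fun k => v k t) n * h n
          + (α + β * v n t) * backProd p (fun k => v k t) n * ∑ i ∈ range p, h (n - (i + 1)))
        / denFactor p β (fun k => v k t) n ^ 2) t := by
  have hP : HasDerivAt (fun s => backProd p (fun k => v k s) n)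
      (backProd p (fun k => v k t) n * ∑ i ∈ range p, h (n - (i + 1))) t :=
    HasDerivAt.finsetProd_of_mul fun i _ => hv _
  have hQ : HasDerivAt (fun s => ∏ i ∈ range (p + 1), v (n - i) s)
      ((∏ i ∈ range (p + 1), v (n - i) t) * ∑ i ∈ range (p + 1), h (n - i)) t :=
    HasDerivAt.finsetProd_of_mul fun i _ => hv _
  refine (((hv n).mul ((hP.const_mul α).const_add 1)).div
    ((hQ.const_mul β).const_sub 1) hB).congr_deriv ?_
  have hQx := prod_range_succ_sub_eq p (fun k => v k t) n
  simp only [denFactor, numFactor, Pi.mul_apply, sum_range_succ', hQx]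
  push_cast
  simp only [sub_zero]
  ring

end Miura

end

open Miura

theorem miura_valbe_to_wtw_general
    (p : ℕ) (α β : ℂ) (v : ℤ → ℝ → ℂ)
    (hne : ∀ (n : ℤ) (t : ℝ),
      1 - β * ∏ i ∈ Finset.range (p + 1), v (n - i) t ≠ 0)
    (hv : ∀ (n : ℤ) (t : ℝ),
      HasDerivAt (v n)
        (v n t * (α + β * v n t)
            * ((∏ i ∈ Finset.range p, v (n + (i + 1)) t)
                - ∏ i ∈ Finset.range p, v (n - (i + 1)) t)
            * (∏ j ∈ Finset.range p,
                (1 + α * ∏ i ∈ Finset.range p, v (n + (j + 1) - (i + 1)) t))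
          / ∏ j ∈ Finset.range (p + 1),
              (1 - β * ∏ i ∈ Finset.range (p + 1), v (n + j - i) t)) t)
    (w : ℤ → ℝ → ℂ)
    (hw : ∀ (n : ℤ) (t : ℝ),
      w n t = v n t * (1 + α * ∏ i ∈ Finset.range p, v (n - (i + 1)) t)
        / (1 - β * ∏ i ∈ Finset.range (p + 1), v (n - i) t)) :
    ∀ (n : ℤ) (t : ℝ),
      HasDerivAt (w n)
        (w n t * (α + β * w n t)
          * ((∏ i ∈ Finset.range p, w (n + (i + 1)) t)
              - ∏ i ∈ Finset.range p, w (n - (i + 1)) t)) t := by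
  obtain rfl : w = fun m s => transform p α β (fun k => v k s) m := by
    ext m s; exact hw m s
  intro n t
  have hv' : ∀ k, HasDerivAt (v k) (v k t * velocity p α β (fun k => v k t) k) t := fun k => by
    refine (hv k t).congr_deriv ?_
    simp only [velocity, fwdProd, backProd, numFactor, denFactor]
    ring
  have hB : ∀ m, denFactor p β (fun k => v k t) m ≠ 0 := fun m => hne m t
  rw [← transform_rate_eq α hB]
  exact hasDerivAt_transform p α β hv' n (hB n)

/-- For `p ∈ ℤ_{>0}` and `α, β ∈ ℂ`, the formula
`w = v(1 + α∏_{i=1}^p v_{−i})/(1 − β∏_{i=0}^p v_{−i})`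
is a Miura-type transformation from the modified equation
`vₜ = v(α + βv)(∏_{i=1}^p v_i − ∏_{i=1}^p v_{−i})
      ·∏_{j=1}^p(1 + α∏_{i=1}^p v_{j−i}) / ∏_{j=0}^p(1 − β∏_{i=0}^p v_{j−i})`
to the equation `wₜ = w(α + βw)(∏_{i=1}^p w_i − ∏_{i=1}^p w_{−i})`. -/
theorem miura_valbe_to_wtw
    (p : ℕ) (hp : 0 < p) (α β : ℂ) (v : ℤ → ℝ → ℂ)
    (hne : ∀ (n : ℤ) (t : ℝ),
      1 - β * ∏ i ∈ Finset.range (p + 1), v (n - i) t ≠ 0)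
    (hv : ∀ (n : ℤ) (t : ℝ),
      HasDerivAt (v n)
        (v n t * (α + β * v n t)
            * ((∏ i ∈ Finset.range p, v (n + (i + 1)) t)
                - ∏ i ∈ Finset.range p, v (n - (i + 1)) t)
            * (∏ j ∈ Finset.range p,
                (1 + α * ∏ i ∈ Finset.range p, v (n + (j + 1) - (i + 1)) t))
          / ∏ j ∈ Finset.range (p + 1),
              (1 - β * ∏ i ∈ Finset.range (p + 1), v (n + j - i) t)) t)
    (w : ℤ → ℝ → ℂ)
    (hw : ∀ (n : ℤ) (t : ℝ),
      w n t = v n t * (1 + α * ∏ i ∈ Finset.range p, v (n - (i + 1)) t)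
        / (1 - β * ∏ i ∈ Finset.range (p + 1), v (n - i) t)) :
    ∀ (n : ℤ) (t : ℝ),
      HasDerivAt (w n)
        (w n t * (α + β * w n t)
          * ((∏ i ∈ Finset.range p, w (n + (i + 1)) t)
              - ∏ i ∈ Finset.range p, w (n - (i + 1)) t)) t :=
  miura_valbe_to_wtw_general p α β v hne hv w hw
end

section
/- Fix λ ∈ ℂ. Let u¹, u² : ℤ → ℝ → ℂ be t-differentiable functions. Define 2×2 matrices M(n,t) := [[λ + u²(n,t), u¹(n,t)], [−1, 0]] and 𝒰(n,t) := [[0, −u¹(n,t)], [1, λ + u²(n−1,t)]]. Then the Darboux–Lax equation ∂_t M(n,t) = 𝒰(n+1,t)·M(n,t) − M(n,t)·𝒰(n,t) holds for all n ∈ ℤ and t ∈ ℝ if and only if (u¹,u²) satisfies the relabelled Toda lattice: ∂_t u¹(n,t) = u¹(n,t)·(u²(n,t) − u²(n−1,t)) and ∂_t u²(n,t) = u¹(n+1,t) − u¹(n,t) for all n and t. -/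
/-! The commutator `S(𝒰)·M − M·𝒰` has first row `(u¹₁ − u¹, u¹(u² − u²₋₁))` and zero second
row, while the non-constant entries of `M` are `λ + u²` and `u¹`: entrywise, the Darboux–Lax
equation is the Toda system. -/

lemma Matrix.hasDerivAt_of_fin_two_apply_iff {𝕜 F : Type*} [NontriviallyNormedField 𝕜]
    [NormedAddCommGroup F] [NormedSpace 𝕜 F] {a b c d : 𝕜 → F} {a' b' c' d' : F} {t : 𝕜} :
    (∀ i j : Fin 2,
        HasDerivAt (fun s => !![a s, b s; c s, d s] i j) (!![a', b'; c', d'] i j) t) ↔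
      HasDerivAt a a' t ∧ HasDerivAt b b' t ∧ HasDerivAt c c' t ∧ HasDerivAt d d' t := by
  simp only [Fin.forall_fin_two, Matrix.of_apply, Matrix.cons_val', Matrix.cons_val_zero,
    Matrix.cons_val_one, Matrix.empty_val', Matrix.cons_val_fin_one, and_assoc]

lemma toda_lax_commutator {R : Type*} [CommRing R] (lam a a' c d : R) :
    !![0, -a'; 1, lam + c] * !![lam + c, a; -1, 0] - !![lam + c, a; -1, 0] * !![0, -a; 1, lam + d]
      = !![a' - a, a * (c - d); 0, 0] := by
  ext i j
  fin_cases i <;> fin_cases j <;> simp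
  ring

theorem DLR_toda_iff_general
    (lam : ℂ) (u1 u2 : ℤ → ℝ → ℂ)
    (M 𝒰 : ℤ → ℝ → Matrix (Fin 2) (Fin 2) ℂ)
    (hM : ∀ (n : ℤ) (t : ℝ), M n t = !![lam + u2 n t, u1 n t; -1, 0])
    (hU : ∀ (n : ℤ) (t : ℝ), 𝒰 n t = !![0, -u1 n t; 1, lam + u2 (n - 1) t]) :
    (∀ (n : ℤ) (t : ℝ) (i j : Fin 2),
        HasDerivAt (fun s => M n s i j)
          ((𝒰 (n + 1) t * M n t - M n t * 𝒰 n t) i j) t)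
    ↔ (∀ (n : ℤ) (t : ℝ),
        HasDerivAt (u1 n) (u1 n t * (u2 n t - u2 (n - 1) t)) t ∧
        HasDerivAt (u2 n) (u1 (n + 1) t - u1 n t) t) := by
  simp only [hM, hU, add_sub_cancel_right, toda_lax_commutator,
    Matrix.hasDerivAt_of_fin_two_apply_iff, hasDerivAt_const_add_iff, hasDerivAt_const, and_true]
  exact forall₂_congr fun _ _ => and_comm

/-- For t-differentiable `u¹, u² : ℤ → ℝ → ℂ` and fixed `λ ∈ ℂ`, the
Darboux–Lax equation `∂ₜ M = S(𝒰)·M − M·𝒰` for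
`M = [[λ + u², u¹],[−1, 0]]`, `𝒰 = [[0, −u¹],[1, λ + u²₋₁]]`
holds for all `n`, `t` if and only if `(u¹, u²)` satisfies the relabelled Toda
lattice `u¹ₜ = u¹(u² − u²₋₁)`, `u²ₜ = u¹₁ − u¹`. -/
theorem DLR_toda_iff
    (lam : ℂ) (u1 u2 : ℤ → ℝ → ℂ)
    (hd1 : ∀ (n : ℤ) (t : ℝ), DifferentiableAt ℝ (u1 n) t)
    (hd2 : ∀ (n : ℤ) (t : ℝ), DifferentiableAt ℝ (u2 n) t)
    (M 𝒰 : ℤ → ℝ → Matrix (Fin 2) (Fin 2) ℂ)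
    (hM : ∀ (n : ℤ) (t : ℝ), M n t = !![lam + u2 n t, u1 n t; -1, 0])
    (hU : ∀ (n : ℤ) (t : ℝ), 𝒰 n t = !![0, -u1 n t; 1, lam + u2 (n - 1) t]) :
    (∀ (n : ℤ) (t : ℝ) (i j : Fin 2),
        HasDerivAt (fun s => M n s i j)
          ((𝒰 (n + 1) t * M n t - M n t * 𝒰 n t) i j) t)
    ↔ (∀ (n : ℤ) (t : ℝ),
        HasDerivAt (u1 n) (u1 n t * (u2 n t - u2 (n - 1) t)) t ∧
        HasDerivAt (u2 n) (u1 (n + 1) t - u1 n t) t) :=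
  DLR_toda_iff_general lam u1 u2 M 𝒰 hM hU
end

section
/- Let v¹, v² : ℤ → ℝ → ℂ be t-differentiable with v¹(n−1,t)·v²(n,t) − v¹(n,t)·v²(n−1,t) ≠ 0 and v¹(n+1,t)·v²(n,t) − v¹(n,t)·v²(n+1,t) ≠ 0 for all n, t, satisfying for all n, t: ∂_t v¹(n,t) = v¹(n−1,t)·(v¹(n,t)v²(n+1,t) − v¹(n+1,t)v²(n,t)) / (v¹(n−1,t)v²(n,t) − v¹(n,t)v²(n−1,t)) and ∂_t v²(n,t) = v²(n−1,t)·(v¹(n,t)v²(n+1,t) − v¹(n+1,t)v²(n,t)) / (v¹(n−1,t)v²(n,t) − v¹(n,t)v²(n−1,t)). Fix c₁ ∈ ℂ and define u¹(n,t) := (v¹(n+2,t)v²(n+1,t) − v¹(n+1,t)v²(n+2,t)) / (v¹(n+1,t)v²(n,t) − v¹(n,t)v²(n+1,t)) and u²(n,t) := −c₁ + (v¹(n,t)v²(n+2,t) − v¹(n+2,t)v²(n,t)) / (v¹(n,t)v²(n+1,t) − v¹(n+1,t)v²(n,t)). Then for all n, t: ∂_t u¹(n,t) = u¹(n,t)·(u²(n,t)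 − u²(n−1,t)) and ∂_t u²(n,t) = u¹(n+1,t) − u¹(n,t), i.e. (u¹,u²) satisfies the relabelled Toda lattice. -/
/-!
Write `v(n) = (v¹(n), v²(n))` and let `C(m, n) = det (v(m), v(n))` be the Casoratian. The modified
Toda system says `v(n)ₜ = r(n) v(n-1)` with `r(n) = C(n, n+1) / C(n-1, n)`, hence
`C(m, n)ₜ = r(m) C(m-1, n) + r(n) C(m, n-1)`, and `C(n, n) = 0` kills one term whenever `m, n` are
neighbours. Both `u¹` and `u² + c₁` are quotients of Casoratians of nearby sites; differentiating
them, the first Toda equation reduces to the antisymmetry of `C`, the second to the three-term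
Plücker relation `C(n-1,n) C(n+1,n+2) - C(n-1,n+1) C(n,n+2) + C(n-1,n+2) C(n,n+1) = 0`.
-/

noncomputable section

def casoratian (v1 v2 : ℤ → ℝ → ℂ) (m n : ℤ) (t : ℝ) : ℂ :=
  v1 m t * v2 n t - v1 n t * v2 m t

theorem casoratian_antisymm (v1 v2 : ℤ → ℝ → ℂ) (m n : ℤ) (t : ℝ) :
    casoratian v1 v2 n m t = -casoratian v1 v2 m n t := by
  unfold casoratian
  ring

theorem casoratian_ne_zero_swap {v1 v2 : ℤ → ℝ → ℂ} {m n : ℤ} {t : ℝ}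
    (h : casoratian v1 v2 m n t ≠ 0) : casoratian v1 v2 n m t ≠ 0 := by
  rwa [casoratian_antisymm, neg_ne_zero]

theorem hasDerivAt_casoratian {v1 v2 : ℤ → ℝ → ℂ} {m m' n n' : ℤ} {t : ℝ} {a b : ℂ}
    (h1m : HasDerivAt (v1 m) (v1 m' t * a) t) (h2m : HasDerivAt (v2 m) (v2 m' t * a) t)
    (h1n : HasDerivAt (v1 n) (v1 n' t * b) t) (h2n : HasDerivAt (v2 n) (v2 n' t * b) t) :
    HasDerivAt (casoratian v1 v2 m n)
      (a * casoratian v1 v2 m' n t + b * casoratian v1 v2 m n' t) t := by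
  refine ((h1m.mul h2n).sub (h1n.mul h2m)).congr_deriv ?_
  unfold casoratian
  ring

def todaRate (v1 v2 : ℤ → ℝ → ℂ) (n : ℤ) (t : ℝ) : ℂ :=
  casoratian v1 v2 n (n + 1) t / casoratian v1 v2 (n - 1) n t

def IsModifiedTodaSolution (v1 v2 : ℤ → ℝ → ℂ) : Prop :=
  ∀ n t, HasDerivAt (v1 n) (v1 (n - 1) t * todaRate v1 v2 n t) t ∧
    HasDerivAt (v2 n) (v2 (n - 1) t * todaRate v1 v2 n t) t

def miuraFst (v1 v2 : ℤ → ℝ → ℂ) (n : ℤ) (t : ℝ) : ℂ :=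
  casoratian v1 v2 (n + 2) (n + 1) t / casoratian v1 v2 (n + 1) n t

def miuraSnd (c : ℂ) (v1 v2 : ℤ → ℝ → ℂ) (n : ℤ) (t : ℝ) : ℂ :=
  -c + casoratian v1 v2 n (n + 2) t / casoratian v1 v2 n (n + 1) t

namespace IsModifiedTodaSolution

variable {v1 v2 : ℤ → ℝ → ℂ}

theorem hasDerivAt_casoratian (hv : IsModifiedTodaSolution v1 v2) (m n : ℤ) (t : ℝ) :
    HasDerivAt (casoratian v1 v2 m n)
      (todaRate v1 v2 m t * casoratian v1 v2 (m - 1) n t +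
        todaRate v1 v2 n t * casoratian v1 v2 m (n - 1) t) t :=
  _root_.hasDerivAt_casoratian (hv m t).1 (hv m t).2 (hv n t).1 (hv n t).2

variable (hC : ∀ n t, casoratian v1 v2 (n + 1) n t ≠ 0) (hv : IsModifiedTodaSolution v1 v2)
  (c : ℂ) (n : ℤ) (t : ℝ)
include hC hv

theorem hasDerivAt_miuraFst :
    HasDerivAt (miuraFst v1 v2 n)
      (miuraFst v1 v2 n t * (miuraSnd c v1 v2 n t - miuraSnd c v1 v2 (n - 1) t)) t := by
  have h0 := hC n t
  have h1 := casoratian_ne_zero_swap (hC (n + 1) t)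
  refine ((hv.hasDerivAt_casoratian (n + 2) (n + 1) t).div
    (hv.hasDerivAt_casoratian (n + 1) n t) h0).congr_deriv ?_
  simp only [miuraFst, miuraSnd, todaRate]
  -- brings shifted sites such as `n + 2 - 1` to one normal form, so `field_simp` sees the denominators
  ring_nf at h0 h1 ⊢
  field_simp
  unfold casoratian
  ring

theorem hasDerivAt_miuraSnd :
    HasDerivAt (miuraSnd c v1 v2 n) (miuraFst v1 v2 (n + 1) t - miuraFst v1 v2 n t) t := by
  have hC' (k : ℤ) := casoratian_ne_zero_swap (hC k t)
  refine ((hasDerivAt_const t (-c)).add ((hv.hasDerivAt_casoratian n (n + 2) t).div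
    (hv.hasDerivAt_casoratian n (n + 1) t) (hC' n))).congr_deriv ?_
  have h0 := hC n t
  have h1 := hC (n + 1) t
  have h2 := hC' (n - 1)
  have h3 := hC' n
  have h4 := hC' (n + 1)
  simp only [miuraFst, todaRate]
  ring_nf at h0 h1 h2 h3 h4 ⊢
  field_simp
  -- the Plücker relation of the header, which `ring` sees once `C` is expanded
  unfold casoratian
  ring

end IsModifiedTodaSolution

end

theorem miura_to_toda_general
    (c₁ : ℂ) (v1 v2 : ℤ → ℝ → ℂ)
    (hne₂ : ∀ (n : ℤ) (t : ℝ),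
      v1 (n + 1) t * v2 n t - v1 n t * v2 (n + 1) t ≠ 0)
    (hv1 : ∀ (n : ℤ) (t : ℝ),
      HasDerivAt (v1 n)
        (v1 (n - 1) t * (v1 n t * v2 (n + 1) t - v1 (n + 1) t * v2 n t)
          / (v1 (n - 1) t * v2 n t - v1 n t * v2 (n - 1) t)) t)
    (hv2 : ∀ (n : ℤ) (t : ℝ),
      HasDerivAt (v2 n)
        (v2 (n - 1) t * (v1 n t * v2 (n + 1) t - v1 (n + 1) t * v2 n t)
          / (v1 (n - 1) t * v2 n t - v1 n t * v2 (n - 1) t)) t)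
    (u1 u2 : ℤ → ℝ → ℂ)
    (hu1 : ∀ (n : ℤ) (t : ℝ),
      u1 n t = (v1 (n + 2) t * v2 (n + 1) t - v1 (n + 1) t * v2 (n + 2) t)
        / (v1 (n + 1) t * v2 n t - v1 n t * v2 (n + 1) t))
    (hu2 : ∀ (n : ℤ) (t : ℝ),
      u2 n t = -c₁ + (v1 n t * v2 (n + 2) t - v1 (n + 2) t * v2 n t)
        / (v1 n t * v2 (n + 1) t - v1 (n + 1) t * v2 n t)) :
    ∀ (n : ℤ) (t : ℝ),
      HasDerivAt (u1 n) (u1 n t * (u2 n t - u2 (n - 1) t)) t ∧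
      HasDerivAt (u2 n) (u1 (n + 1) t - u1 n t) t := by
  have hv : IsModifiedTodaSolution v1 v2 := fun n t =>
    ⟨(hv1 n t).congr_deriv (mul_div_assoc _ _ _), (hv2 n t).congr_deriv (mul_div_assoc _ _ _)⟩
  obtain rfl : u1 = miuraFst v1 v2 := funext₂ hu1
  obtain rfl : u2 = miuraSnd c₁ v1 v2 := funext₂ hu2
  exact fun n t => ⟨hv.hasDerivAt_miuraFst hne₂ c₁ n t, hv.hasDerivAt_miuraSnd hne₂ c₁ n t⟩

/-- The formulas
`u¹ = (v¹₂v²₁ − v¹₁v²₂)/(v¹₁v² − v¹v²₁)`,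
`u² = −c₁ + (v¹v²₂ − v¹₂v²)/(v¹v²₁ − v¹₁v²)`
determine a Miura-type transformation from the modified Toda system
`v¹ₜ = v¹₋₁(v¹v²₁ − v¹₁v²)/(v¹₋₁v² − v¹v²₋₁)`,
`v²ₜ = v²₋₁(v¹v²₁ − v¹₁v²)/(v¹₋₁v² − v¹v²₋₁)`
to the relabelled Toda lattice `u¹ₜ = u¹(u² − u²₋₁)`, `u²ₜ = u¹₁ − u¹`. -/
theorem miura_to_toda
    (c₁ : ℂ) (v1 v2 : ℤ → ℝ → ℂ)
    (hne₁ : ∀ (n : ℤ) (t : ℝ),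
      v1 (n - 1) t * v2 n t - v1 n t * v2 (n - 1) t ≠ 0)
    (hne₂ : ∀ (n : ℤ) (t : ℝ),
      v1 (n + 1) t * v2 n t - v1 n t * v2 (n + 1) t ≠ 0)
    (hv1 : ∀ (n : ℤ) (t : ℝ),
      HasDerivAt (v1 n)
        (v1 (n - 1) t * (v1 n t * v2 (n + 1) t - v1 (n + 1) t * v2 n t)
          / (v1 (n - 1) t * v2 n t - v1 n t * v2 (n - 1) t)) t)
    (hv2 : ∀ (n : ℤ) (t : ℝ),
      HasDerivAt (v2 n)
        (v2 (n - 1) t * (v1 n t * v2 (n + 1) t - v1 (n + 1) t * v2 n t)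
          / (v1 (n - 1) t * v2 n t - v1 n t * v2 (n - 1) t)) t)
    (u1 u2 : ℤ → ℝ → ℂ)
    (hu1 : ∀ (n : ℤ) (t : ℝ),
      u1 n t = (v1 (n + 2) t * v2 (n + 1) t - v1 (n + 1) t * v2 (n + 2) t)
        / (v1 (n + 1) t * v2 n t - v1 n t * v2 (n + 1) t))
    (hu2 : ∀ (n : ℤ) (t : ℝ),
      u2 n t = -c₁ + (v1 n t * v2 (n + 2) t - v1 (n + 2) t * v2 n t)
        / (v1 n t * v2 (n + 1) t - v1 (n + 1) t * v2 n t)) :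
    ∀ (n : ℤ) (t : ℝ),
      HasDerivAt (u1 n) (u1 n t * (u2 n t - u2 (n - 1) t)) t ∧
      HasDerivAt (u2 n) (u1 (n + 1) t - u1 n t) t :=
  miura_to_toda_general c₁ v1 v2 hne₂ hv1 hv2 u1 u2 hu1 hu2
end
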